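/- arXiv:2001.06621 — 11 statements merged into one kernel-verified Lean document; each statement's English description precedes it below -/
import Mathlib

section
/- Let d be a derivation of the Lie algebra 𝔪₀ (with basis e₁, e₂, e₃, … and brackets [eᵢ, e₁] = e_{i+1} for i ≥ 2, all other brackets of basis elements zero). Then there exist scalars α₁, …, α_t and β₂, …, β_t such that d(e₁) = Σ_{i=1}^{t} αᵢ eᵢ and d(e_k) = ((k−2)α₁ + β₂) e_k + Σ_{i=3}^{t} βᵢ e_{i+k−2} for all k ≥ 2. -/
/-!
Since e_{k+1} = ⁅e_k, e₁⁆ for k ≥ 2, the Leibniz rule gives d(e_{k+1}) = ⁅d(e_k), e₁⁆ + α₁ e_{k+1}: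
bracketing with e₁ shifts every index of d(e_k) up by one, so by induction d is determined by
d(e₁) and d(e₂). The e₁-coefficient of d(e₂) vanishes: it is the coefficient of e₄ in
0 = d⁅e₃, e₂⁆ = ⁅d(e₃), e₂⁆ + ⁅e₃, d(e₂)⁆, where the first term is zero because
⁅⁅x, e₁⁆, e₂⁆ = 0 for every x.
-/

open Finset

theorem exists_eq_sum_Icc_of_mem_span_range {R M : Type*} [Semiring R] [AddCommMonoid M]
    [Module R M] {e : ℕ → M} {x : M}
    (hx : x ∈ Submodule.span R (Set.range fun i : {n : ℕ // 1 ≤ n} => e i.1)) :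
    ∃ (N : ℕ) (c : ℕ → R), ∀ t, N ≤ t → x = ∑ i ∈ Icc 1 t, c i • e i := by
  have hrange : Set.range (fun i : {n : ℕ // 1 ≤ n} => e i.1) = e '' Set.Ici 1 := by
    ext; simp
  rw [hrange, Finsupp.mem_span_image_iff_linearCombination] at hx
  obtain ⟨c, hc, rfl⟩ := hx
  refine ⟨c.support.sup id, c, fun t ht => ?_⟩
  rw [Finsupp.linearCombination_apply]
  refine Finsupp.sum_of_support_subset c (fun i hi => ?_) _ (fun i _ => zero_smul R (e i))
  exact mem_Icc.2 ⟨hc hi, (le_sup (f := id) hi).trans ht⟩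

section

variable {R L : Type*} [CommRing R] [LieRing L] [LieAlgebra R L] {e : ℕ → L}
  (hbr : ∀ i, 2 ≤ i → ⁅e i, e 1⁆ = e (i + 1))
  (hzero : ∀ i j, 1 ≤ i → 1 ≤ j → i ≠ 1 → j ≠ 1 → ⁅e i, e j⁆ = 0)
include hbr

theorem sum_smul_lie_one {ι : Type*} {s : Finset ι} {f : ι → ℕ} (hf : ∀ i ∈ s, 2 ≤ f i)
    (c : ι → R) : ⁅∑ i ∈ s, c i • e (f i), e 1⁆ = ∑ i ∈ s, c i • e (f i + 1) := by
  rw [sum_lie]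
  exact sum_congr rfl fun i hi => by rw [smul_lie, hbr _ (hf i hi)]

include hzero

theorem lie_sum_Icc_smul {k t : ℕ} (hk : 2 ≤ k) (ht : 1 ≤ t) (a : ℕ → R) :
    ⁅e k, ∑ i ∈ Icc 1 t, a i • e i⁆ = a 1 • e (k + 1) := by
  rw [lie_sum, sum_eq_single_of_mem 1 (mem_Icc.2 ⟨le_rfl, ht⟩), lie_smul, hbr k hk]
  intro i hi hi1
  rw [lie_smul, hzero k i (by omega) (mem_Icc.1 hi).1 (by omega) hi1, smul_zero]

theorem lie_lie_one_two
    (hspan : Submodule.span R (Set.range fun i : {n : ℕ // 1 ≤ n} => e i.1) = ⊤) (x : L) :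
    ⁅⁅x, e 1⁆, e 2⁆ = 0 := by
  suffices LieAlgebra.ad R L (e 2) ∘ₗ LieAlgebra.ad R L (e 1) = 0 by
    rw [← lie_skew, ← lie_skew x, lie_neg, neg_neg]
    exact LinearMap.congr_fun this x
  refine LinearMap.ext_on_range hspan fun ⟨i, hi⟩ => ?_
  rcases hi.eq_or_lt with rfl | hi
  · simp
  · simp [← lie_skew (e 1), hbr i hi, hzero (i + 1) 2 (by omega) (by omega) (by omega) (by omega)]

variable {d : Module.End R L} (hd : ∀ a b : L, d ⁅a, b⁆ = ⁅d a, b⁆ + ⁅a, d b⁆)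
  {t : ℕ} {a c : ℕ → R} (hd1 : d (e 1) = ∑ i ∈ Icc 1 t, a i • e i)
include hd hd1

theorem derivation_apply_succ (ht : 1 ≤ t) {k : ℕ} (hk : 2 ≤ k) :
    d (e (k + 1)) = ⁅d (e k), e 1⁆ + a 1 • e (k + 1) := by
  rw [← hbr k hk, hd, hd1, lie_sum_Icc_smul hbr hzero hk ht, hbr k hk]

variable (hd2 : d (e 2) = ∑ i ∈ Icc 1 t, c i • e i)
include hd2

theorem derivation_coeff_one_eq_zero
    (hspan : Submodule.span R (Set.range fun i : {n : ℕ // 1 ≤ n} => e i.1) = ⊤)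
    (hind : LinearIndependent R fun i : {n : ℕ // 1 ≤ n} => e i.1) (ht : 1 ≤ t) : c 1 = 0 := by
  have hde3 : ⁅d (e 3), e 2⁆ = 0 := by
    rw [derivation_apply_succ hbr hzero hd hd1 ht le_rfl, add_lie, lie_lie_one_two hbr hzero hspan,
      smul_lie, hzero 3 2 (by omega) (by omega) (by omega) (by omega), smul_zero, add_zero]
  have he3d : ⁅e 3, d (e 2)⁆ = c 1 • e 4 := by
    rw [hd2, lie_sum_Icc_smul hbr hzero (by omega) ht]
  have h := hd (e 3) (e 2)
  rw [hzero 3 2 (by omega) (by omega) (by omega) (by omega), map_zero, hde3, he3d, zero_add,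
    ← zero_smul R (e 4)] at h
  exact (hind.smul_left_injective ⟨4, by omega⟩ h).symm

theorem derivation_apply_of_two_le (ht : 2 ≤ t) (hc1 : c 1 = 0) {k : ℕ} (hk : 2 ≤ k) :
    d (e k) = (((k : R) - 2) * a 1 + c 2) • e k + ∑ i ∈ Icc 3 t, c i • e (i + k - 2) := by
  induction k, hk using Nat.le_induction with
  | base =>
    have hsplit : Icc 1 t = insert 1 (insert 2 (Icc 3 t)) := by
      ext; simp only [mem_insert, mem_Icc]; omega
    rw [hd2, hsplit, sum_insert (by simp), sum_insert (by simp), hc1]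
    simp
  | succ k hk ih =>
    rw [derivation_apply_succ hbr hzero hd hd1 (by omega) hk, ih, add_lie, smul_lie, hbr k hk,
      sum_smul_lie_one hbr fun i hi => by grind]
    have hshift : ∑ i ∈ Icc 3 t, c i • e (i + k - 2 + 1) =
        ∑ i ∈ Icc 3 t, c i • e (i + (k + 1) - 2) :=
      sum_congr rfl fun i hi => by grind
    rw [hshift]
    push_cast
    module

end

/-- Every derivation of the Lie algebra 𝔪₀ (basis e₁, e₂, …, with
⁅eᵢ, e₁⁆ = e_{i+1} for i ≥ 2 and all other brackets of basis elements zero) has the form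
d(e₁) = Σ_{i=1}^t αᵢ eᵢ, d(e_k) = ((k−2)α₁ + β₂) e_k + Σ_{i=3}^t βᵢ e_{i+k−2} for k ≥ 2. -/
theorem m0_derivation_form
    (L : Type*) [LieRing L] [LieAlgebra ℂ L] (e : ℕ → L)
    (hind : LinearIndependent ℂ (fun i : {n : ℕ // 1 ≤ n} => e i.1))
    (hspan : Submodule.span ℂ (Set.range (fun i : {n : ℕ // 1 ≤ n} => e i.1)) = ⊤)
    (hbr : ∀ i, 2 ≤ i → ⁅e i, e 1⁆ = e (i + 1))
    (hzero : ∀ i j, 1 ≤ i → 1 ≤ j → i ≠ 1 → j ≠ 1 → ⁅e i, e j⁆ = 0)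
    (d : Module.End ℂ L)
    (hd : ∀ a b : L, d ⁅a, b⁆ = ⁅d a, b⁆ + ⁅a, d b⁆) :
    ∃ (t : ℕ) (α β : ℕ → ℂ),
      d (e 1) = ∑ i ∈ Finset.Icc 1 t, α i • e i ∧
      ∀ k, 2 ≤ k →
        d (e k) = (((k : ℂ) - 2) * α 1 + β 2) • e k
          + ∑ i ∈ Finset.Icc 3 t, β i • e (i + k - 2) := by
  have hmem (x : L) : x ∈ Submodule.span ℂ _ := hspan.ge (Submodule.mem_top (x := x))
  obtain ⟨N₁, a, ha⟩ := exists_eq_sum_Icc_of_mem_span_range (hmem (d (e 1)))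
  obtain ⟨N₂, c, hc⟩ := exists_eq_sum_Icc_of_mem_span_range (hmem (d (e 2)))
  let t := max (max N₁ N₂) 2
  have hd1 := ha t (by omega)
  have hd2 := hc t (by omega)
  have hc1 := derivation_coeff_one_eq_zero hbr hzero hd hd1 hd2 hspan hind (by omega)
  exact ⟨t, a, c, hd1,
    fun k hk => derivation_apply_of_two_le hbr hzero hd hd1 hd2 (by omega) hc1 hk⟩
end

section
/- Let d be a derivation of the Lie algebra 𝔪₂. Then there exist scalars α₁, α₃, …, α_n and β₃, …, β_n such that d(e₁) = α₁ e₁ + Σ_{i=3}^{n} αᵢ eᵢ, d(e₂) = 2α₁ e₂ + Σ_{i=3}^{n} βᵢ eᵢ, and for every i ≥ 3, d(eᵢ) = i α₁ eᵢ + β₃ e_{i+1} + Σ_{j=i+2}^{n+i−2} (β_{j−i+2} − α_{j−i+1}) e_j − α_n e_{n+i−1}. -/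
/-!
Write `d e₁ = ∑ aᵢ eᵢ` and `d e₂ = ∑ bᵢ eᵢ` (finite sums, by the spanning hypothesis). The Leibniz
rule applied to `e₃ = [e₁, e₂]` and then to `e_{i+1} = [e₁, eᵢ]` determines every `d eᵢ`, `i ≥ 3`,
by induction: bracketing with `e₁` only shifts indices, and `[d e₁, eᵢ]` only sees `a₁, a₂`.
Computing `d e₅` a second time from `e₅ = [e₂, e₃]` and comparing coefficients of `e₄, e₅, e₆`
gives `b₁ = 0`, `b₂ = 2a₁` and `a₂ = 0`.
-/

open Finset

theorem exists_eq_sum_Icc_smul {R M : Type*} [Semiring R] [AddCommMonoid M] [Module R M]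
    {e : ℕ → M} (hspan : Submodule.span R (Set.range fun i : {n : ℕ // 1 ≤ n} => e i.1) = ⊤)
    (x : M) : ∃ (N : ℕ) (c : ℕ → R), ∀ n, N ≤ n → x = ∑ i ∈ Icc 1 n, c i • e i := by
  have hx : x ∈ Submodule.span R (e '' Set.Ici 1) := by
    rw [Set.image_eq_range]
    exact hspan ▸ Submodule.mem_top
  obtain ⟨l, hl, rfl⟩ := (Finsupp.mem_span_image_iff_linearCombination R).mp hx
  refine ⟨l.support.sup id, l, fun n hn => ?_⟩
  refine (Finsupp.linearCombination_apply R l).trans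
    (Finsupp.sum_of_support_subset l (fun i hi => ?_) _ fun i _ => zero_smul R (e i))
  exact mem_Icc.mpr ⟨hl hi, (le_sup (f := id) hi).trans hn⟩

theorem LinearIndependent.eq_zero_of_smul_add_smul_add_smul {ι R M : Type*} [Ring R]
    [AddCommGroup M] [Module R M] {v : ι → M} (hv : LinearIndependent R v) {i j k : ι}
    (hij : i ≠ j) (hik : i ≠ k) (hjk : j ≠ k) {x y z : R}
    (h : x • v i + y • v j + z • v k = 0) : x = 0 ∧ y = 0 ∧ z = 0 := by
  have hinj : Function.Injective ![i, j, k] := by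
    intro p q hpq
    fin_cases p <;> fin_cases q <;> simp_all [eq_comm]
  have := Fintype.linearIndependent_iff.mp (hv.comp _ hinj) ![x, y, z]
    (by simpa [Fin.sum_univ_three, add_assoc] using h)
  exact ⟨this 0, this 1, this 2⟩

theorem sum_Icc_one_eq_add_add_sum_Icc_three {M : Type*} [AddCommMonoid M] {n : ℕ}
    (hn : 2 ≤ n) (f : ℕ → M) : ∑ i ∈ Icc 1 n, f i = f 1 + f 2 + ∑ i ∈ Icc 3 n, f i := by
  rw [← insert_Icc_add_one_left_eq_Icc (by omega : 1 ≤ n), sum_insert (by simp),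
    ← insert_Icc_add_one_left_eq_Icc (show 1 + 1 ≤ n from hn), sum_insert (by simp)]
  exact (add_assoc _ _ _).symm

theorem sum_Icc_smul_sub_sum_Icc_smul {R M : Type*} [Ring R] [AddCommGroup M] [Module R M]
    (v : ℕ → M) (a b : ℕ → R) {n : ℕ} (hn : 3 ≤ n) (i : ℕ) :
    ∑ j ∈ Icc 3 n, b j • v (i + j - 2) - ∑ j ∈ Icc 3 n, a j • v (i + j - 1) =
      b 3 • v (i + 1) + ∑ j ∈ Icc (i + 2) (n + i - 2), (b (j - i + 2) - a (j - i + 1)) • v j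
        - a n • v (n + i - 1) := by
  have hb : ∑ j ∈ Icc 3 n, b j • v (i + j - 2) =
      b 3 • v (i + 1) + ∑ j ∈ Icc (i + 2) (n + i - 2), b (j - i + 2) • v j := by
    rw [← insert_Icc_add_one_left_eq_Icc hn, sum_insert (by simp)]
    congr 1
    refine sum_nbij' (fun j => i + j - 2) (fun j => j - i + 2) ?_ ?_ ?_ ?_ ?_ <;>
      intro j hj <;> simp only [mem_Icc] at hj ⊢ <;> first | omega | (congr 2; omega)
  have ha : ∑ j ∈ Icc 3 n, a j • v (i + j - 1) =
      ∑ j ∈ Icc (i + 2) (n + i - 2), a (j - i + 1) • v j + a n • v (n + i - 1) := by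
    rw [← insert_Icc_sub_one_right_eq_Icc hn, sum_insert (by simp; omega), add_comm, add_comm i]
    congr 1
    refine sum_nbij' (fun j => i + j - 1) (fun j => j - i + 1) ?_ ?_ ?_ ?_ ?_ <;>
      intro j hj <;> simp only [mem_Icc] at hj ⊢ <;> first | omega | (congr 2; omega)
  rw [hb, ha]
  simp only [sub_smul, sum_sub_distrib]
  abel

section M2

variable {R L : Type*} [CommRing R] [LieRing L] [LieAlgebra R L] {e : ℕ → L}

theorem lie_sum_smul_of_lie_eq {ι : Type*} {x : L} {m k : ℕ}
    (hx : ∀ i, m ≤ i → ⁅x, e i⁆ = e (i + k)) {s : Finset ι} {f : ι → ℕ}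
    (hf : ∀ j ∈ s, m ≤ f j) (c : ι → R) :
    ⁅x, ∑ j ∈ s, c j • e (f j)⁆ = ∑ j ∈ s, c j • e (f j + k) := by
  rw [lie_sum]
  exact sum_congr rfl fun j hj => by rw [lie_smul, hx _ (hf j hj)]

theorem add_add_sum_lie_e_of_three_le
    (h1 : ∀ i, 2 ≤ i → ⁅e 1, e i⁆ = e (i + 1)) (h2 : ∀ j, 3 ≤ j → ⁅e 2, e j⁆ = e (j + 2))
    (h0 : ∀ i j, 3 ≤ i → 3 ≤ j → ⁅e i, e j⁆ = 0) {k : ℕ} (hk : 3 ≤ k) (n : ℕ) (c : ℕ → R) :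
    ⁅c 1 • e 1 + c 2 • e 2 + ∑ i ∈ Icc 3 n, c i • e i, e k⁆ =
      c 1 • e (k + 1) + c 2 • e (k + 2) := by
  have hu : ⁅∑ i ∈ Icc 3 n, c i • e i, e k⁆ = 0 := by
    rw [sum_lie]
    exact sum_eq_zero fun i hi => by rw [smul_lie, h0 i k (mem_Icc.mp hi).1 hk, smul_zero]
  rw [add_lie, add_lie, hu, smul_lie, smul_lie, h1 k (by omega), h2 k hk, add_zero]

theorem derivation_apply_e_of_three_le
    (h1 : ∀ i, 2 ≤ i → ⁅e 1, e i⁆ = e (i + 1)) (h2 : ∀ j, 3 ≤ j → ⁅e 2, e j⁆ = e (j + 2))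
    (h0 : ∀ i j, 3 ≤ i → 3 ≤ j → ⁅e i, e j⁆ = 0)
    {d : L → L} (hd : ∀ x y : L, d ⁅x, y⁆ = ⁅d x, y⁆ + ⁅x, d y⁆) {n : ℕ} {a b : ℕ → R}
    (ha : d (e 1) = a 1 • e 1 + a 2 • e 2 + ∑ i ∈ Icc 3 n, a i • e i)
    (hb : d (e 2) = b 1 • e 1 + b 2 • e 2 + ∑ i ∈ Icc 3 n, b i • e i) {i : ℕ} (hi : 3 ≤ i) :
    d (e i) = (((i : R) - 2) * a 1 + b 2) • e i + (((i : R) - 3) * a 2) • e (i + 1)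
      + ∑ j ∈ Icc 3 n, b j • e (i + j - 2) - ∑ j ∈ Icc 3 n, a j • e (i + j - 1) := by
  have mem : ∀ j ∈ Icc 3 n, 3 ≤ j := fun j hj => (mem_Icc.mp hj).1
  induction i, hi using Nat.le_induction with
  | base =>
    have h3 : e 3 = ⁅e 1, e 2⁆ := (h1 2 le_rfl).symm
    have hu : ⁅∑ j ∈ Icc 3 n, a j • e j, e 2⁆ = -∑ j ∈ Icc 3 n, a j • e (j + 2) := by
      rw [← lie_skew, lie_sum_smul_of_lie_eq (f := fun j => j) h2 mem]
    rw [h3, hd, ha, hb, add_lie, add_lie, hu, lie_add, lie_add,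
      lie_sum_smul_of_lie_eq (f := fun j => j) h1 fun j hj => (mem j hj).trans' (by norm_num)]
    simp only [smul_lie, lie_smul, lie_self, ← h3,
      show ∀ j, 3 + j - 2 = j + 1 from fun j => by omega,
      show ∀ j, 3 + j - 1 = j + 2 from fun j => by omega]
    push_cast
    module
  | succ i hi ih =>
    have hsucc := hd (e 1) (e i)
    rw [h1 i (by omega)] at hsucc
    rw [hsucc, ha, add_add_sum_lie_e_of_three_le h1 h2 h0 hi, ih, lie_sub, lie_add, lie_add,
      lie_smul, lie_smul, h1 i (by omega), h1 (i + 1) (by omega),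
      lie_sum_smul_of_lie_eq (f := fun j => i + j - 2) h1 fun j hj => by have := mem j hj; omega,
      lie_sum_smul_of_lie_eq (f := fun j => i + j - 1) h1 fun j hj => by have := mem j hj; omega]
    simp only [show ∀ j, i + j - 2 + 1 = i + 1 + j - 2 from fun j => by omega,
      show ∀ j, i + j - 1 + 1 = i + 1 + j - 1 from fun j => by omega,
      show i + 1 + 1 = i + 2 from rfl]
    push_cast
    module

theorem derivation_coeff_relations [IsAddTorsionFree R]
    (hind : LinearIndependent R fun i : {n : ℕ // 1 ≤ n} => e i.1)
    (h1 : ∀ i, 2 ≤ i → ⁅e 1, e i⁆ = e (i + 1)) (h2 : ∀ j, 3 ≤ j → ⁅e 2, e j⁆ = e (j + 2))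
    (h0 : ∀ i j, 3 ≤ i → 3 ≤ j → ⁅e i, e j⁆ = 0)
    {d : L → L} (hd : ∀ x y : L, d ⁅x, y⁆ = ⁅d x, y⁆ + ⁅x, d y⁆) {n : ℕ} {a b : ℕ → R}
    (ha : d (e 1) = a 1 • e 1 + a 2 • e 2 + ∑ i ∈ Icc 3 n, a i • e i)
    (hb : d (e 2) = b 1 • e 1 + b 2 • e 2 + ∑ i ∈ Icc 3 n, b i • e i) :
    b 1 = 0 ∧ b 2 = 2 * a 1 ∧ a 2 = 0 := by
  have mem : ∀ j ∈ Icc 3 n, 3 ≤ j := fun j hj => (mem_Icc.mp hj).1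
  have h5 := hd (e 2) (e 3)
  rw [h2 3 le_rfl, hb, add_add_sum_lie_e_of_three_le h1 h2 h0 le_rfl,
    derivation_apply_e_of_three_le h1 h2 h0 hd ha hb le_rfl,
    derivation_apply_e_of_three_le h1 h2 h0 hd ha hb (by norm_num : 3 ≤ 5),
    lie_sub, lie_add, lie_add, lie_smul, lie_smul, h2 3 le_rfl, h2 4 (by norm_num),
    lie_sum_smul_of_lie_eq (f := fun j => 3 + j - 2) h2 fun j hj => by have := mem j hj; omega,
    lie_sum_smul_of_lie_eq (f := fun j => 3 + j - 1) h2 fun j hj => by have := mem j hj; omega]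
    at h5
  simp only [show ∀ j, 3 + j - 2 + 2 = 5 + j - 2 from fun j => by omega,
    show ∀ j, 3 + j - 1 + 2 = 5 + j - 1 from fun j => by omega] at h5
  have hcomb : b 1 • e 4 + (b 2 - 2 * a 1) • e 5 + (-(2 * a 2)) • e 6 = 0 := by
    linear_combination (norm := module) -h5
  obtain ⟨hb1, hb2, ha2⟩ := hind.eq_zero_of_smul_add_smul_add_smul (i := ⟨4, by norm_num⟩)
    (j := ⟨5, by norm_num⟩) (k := ⟨6, by norm_num⟩) (by decide) (by decide) (by decide) hcomb
  rw [neg_eq_zero, two_mul, ← two_nsmul] at ha2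
  exact ⟨hb1, sub_eq_zero.mp hb2, (smul_eq_zero.mp ha2).resolve_left two_ne_zero⟩

end M2

/-- Every derivation of the Lie algebra 𝔪₂ (basis e₁, e₂, … with
⁅e₁, eᵢ⁆ = e_{i+1} for i ≥ 2, ⁅e₂, e_j⁆ = e_{j+2} for j ≥ 3, all other brackets of basis
elements zero) has the stated form. -/
theorem m2_derivation_form
    (L : Type*) [LieRing L] [LieAlgebra ℂ L] (e : ℕ → L)
    (hind : LinearIndependent ℂ (fun i : {n : ℕ // 1 ≤ n} => e i.1))
    (hspan : Submodule.span ℂ (Set.range (fun i : {n : ℕ // 1 ≤ n} => e i.1)) = ⊤)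
    (hbr1 : ∀ i, 2 ≤ i → ⁅e 1, e i⁆ = e (i + 1))
    (hbr2 : ∀ j, 3 ≤ j → ⁅e 2, e j⁆ = e (j + 2))
    (hzero : ∀ i j, 3 ≤ i → 3 ≤ j → ⁅e i, e j⁆ = 0)
    (d : Module.End ℂ L)
    (hd : ∀ a b : L, d ⁅a, b⁆ = ⁅d a, b⁆ + ⁅a, d b⁆) :
    ∃ (n : ℕ) (α β : ℕ → ℂ),
      d (e 1) = α 1 • e 1 + ∑ i ∈ Finset.Icc 3 n, α i • e i ∧
      d (e 2) = (2 * α 1) • e 2 + ∑ i ∈ Finset.Icc 3 n, β i • e i ∧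
      ∀ i, 3 ≤ i →
        d (e i) = ((i : ℂ) * α 1) • e i + β 3 • e (i + 1)
          + ∑ j ∈ Finset.Icc (i + 2) (n + i - 2), (β (j - i + 2) - α (j - i + 1)) • e j
          - α n • e (n + i - 1) := by
  obtain ⟨N₁, a, ha⟩ := exists_eq_sum_Icc_smul hspan (d (e 1))
  obtain ⟨N₂, b, hb⟩ := exists_eq_sum_Icc_smul hspan (d (e 2))
  set n := max 3 (max N₁ N₂)
  have hn : 3 ≤ n := le_max_left _ _
  have hde1 : d (e 1) = a 1 • e 1 + a 2 • e 2 + ∑ i ∈ Icc 3 n, a i • e i := by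
    rw [ha n (by omega), sum_Icc_one_eq_add_add_sum_Icc_three (by omega)]
  have hde2 : d (e 2) = b 1 • e 1 + b 2 • e 2 + ∑ i ∈ Icc 3 n, b i • e i := by
    rw [hb n (by omega), sum_Icc_one_eq_add_add_sum_Icc_three (by omega)]
  obtain ⟨hb1, hb2, ha2⟩ := derivation_coeff_relations hind hbr1 hbr2 hzero hd hde1 hde2
  refine ⟨n, a, b, by simpa [ha2] using hde1, by simpa [hb1, hb2] using hde2, fun i hi => ?_⟩
  rw [derivation_apply_e_of_three_le hbr1 hbr2 hzero hd hde1 hde2 hi, add_sub_assoc,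
    sum_Icc_smul_sub_sum_Icc_smul e a b hn, hb2, ha2]
  module
end

section
/- The Lie algebra 𝔪₀ is residually nilpotent: the intersection of the terms of its lower central series is zero, i.e. ⋂_{i≥1} 𝔪₀^i = 0, where 𝔪₀^1 = 𝔪₀ and 𝔪₀^{k+1} = [𝔪₀^k, 𝔪₀]. -/
/-! The brackets of `𝔪₀` raise indices: for `i, j ≥ 1`, `⁅e j, e i⁆` is a multiple of
`e (max i j + 1)`. Hence the `k`-th term of the lower central series lies in the span of the
`e i` with `i > k`, and by linear independence these spans intersect in `0`. -/

open Submodule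

theorem LinearIndependent.iInf_span_image {R M ι κ : Type*} [Semiring R] [AddCommMonoid M]
    [Module R M] [Nonempty κ] {v : ι → M} (hv : LinearIndependent R v) (s : κ → Set ι) :
    ⨅ k, span R (v '' s k) = span R (v '' ⋂ k, s k) := by
  simp only [Finsupp.span_image_eq_map_linearCombination, Finsupp.supported_iInter,
    Submodule.map_iInf _ hv]

theorem lie_mem_of_mem_span {R L M : Type*} [CommRing R] [LieRing L] [LieAlgebra R L]
    [AddCommGroup M] [Module R M] [LieRingModule L M] [LieModule R L M]
    {s : Set L} {t : Set M} {P : Submodule R M} (h : ∀ x ∈ s, ∀ m ∈ t, ⁅x, m⁆ ∈ P)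
    {x : L} {m : M} (hx : x ∈ span R s) (hm : m ∈ span R t) : ⁅x, m⁆ ∈ P := by
  induction hx, hm using span_induction₂ with
  | mem_mem x m hx hm => exact h x hx m hm
  | zero_left => simp
  | zero_right => simp
  | add_left x y m _ _ _ hx hy => simpa only [add_lie] using add_mem hx hy
  | add_right x m n _ _ _ hm hn => simpa only [lie_add] using add_mem hm hn
  | smul_left r x m _ _ hx => simpa only [smul_lie] using P.smul_mem r hx
  | smul_right r x m _ _ hm => simpa only [lie_smul] using P.smul_mem r hm

theorem LieModule.lowerCentralSeries_le_of_lie_mem {R L M : Type*} [CommRing R] [LieRing L]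
    [LieAlgebra R L] [AddCommGroup M] [Module R M] [LieRingModule L M] [LieModule R L M]
    (S : ℕ → Submodule R M) (h₀ : S 0 = ⊤)
    (hS : ∀ k (x : L) (m : M), m ∈ S k → ⁅x, m⁆ ∈ S (k + 1)) (k : ℕ) :
    (lowerCentralSeries R L M k : Submodule R M) ≤ S k := by
  induction k with
  | zero => simp [h₀]
  | succ k ih =>
    rw [lowerCentralSeries_succ, LieSubmodule.lieIdeal_oper_eq_linear_span', span_le]
    rintro _ ⟨x, -, m, hm, rfl⟩
    exact hS k x m (ih hm)

theorem lie_mem_span_singleton_max_succ {R L : Type*} [CommRing R] [LieRing L] [Module R L]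
    {e : ℕ → L} (hbr : ∀ i, 2 ≤ i → ⁅e i, e 1⁆ = e (i + 1))
    (hzero : ∀ i j, 1 ≤ i → 1 ≤ j → i ≠ 1 → j ≠ 1 → ⁅e i, e j⁆ = 0)
    {i j : ℕ} (hi : 1 ≤ i) (hj : 1 ≤ j) : ⁅e i, e j⁆ ∈ R ∙ e (max i j + 1) := by
  rcases eq_or_ne i 1 with rfl | hi1 <;> rcases eq_or_ne j 1 with rfl | hj1
  · simp
  · rw [← lie_skew, hbr j (by omega), max_eq_right hj]
    exact neg_mem (mem_span_singleton_self _)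
  · rw [hbr i (by omega), max_eq_left hi]
    exact mem_span_singleton_self _
  · rw [hzero i j hi hj hi1 hj1]
    exact zero_mem _

/-- The Lie algebra 𝔪₀ is residually nilpotent:
⋂_{i≥1} 𝔪₀^i = 0 for the lower central series.
(Here `LieModule.lowerCentralSeries ℂ L L k` is the paper's L^{k+1}, with L^1 = L.) -/
theorem m0_residually_nilpotent
    (L : Type*) [LieRing L] [LieAlgebra ℂ L] (e : ℕ → L)
    (hind : LinearIndependent ℂ (fun i : {n : ℕ // 1 ≤ n} => e i.1))
    (hspan : Submodule.span ℂ (Set.range (fun i : {n : ℕ // 1 ≤ n} => e i.1)) = ⊤)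
    (hbr : ∀ i, 2 ≤ i → ⁅e i, e 1⁆ = e (i + 1))
    (hzero : ∀ i j, 1 ≤ i → 1 ≤ j → i ≠ 1 → j ≠ 1 → ⁅e i, e j⁆ = 0) :
    ⨅ k : ℕ, LieModule.lowerCentralSeries ℂ L L k = ⊥ := by
  set f := fun i : {n : ℕ // 1 ≤ n} => e i.1
  let S : ℕ → Submodule ℂ L := fun k => span ℂ (f '' {i | k < i.1})
  have hS₀ : S 0 = ⊤ := by
    simpa [S, show {i : {n : ℕ // 1 ≤ n} | 0 < i.1} = Set.univ from
      Set.eq_univ_of_forall fun i => i.2, Set.image_univ] using hspan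
  have hstep : ∀ k (x m : L), m ∈ S k → ⁅x, m⁆ ∈ S (k + 1) := by
    intro k x m hm
    have hx : x ∈ span ℂ (Set.range f) := hspan ▸ mem_top
    refine lie_mem_of_mem_span ?_ hx hm
    rintro _ ⟨j, rfl⟩ _ ⟨i, hi, rfl⟩
    have hji : k + 1 < max j.1 i.1 + 1 := by simp only [Set.mem_ofPred_eq] at hi; omega
    refine (span_singleton_le_iff_mem _ _).mpr ?_
      (lie_mem_span_singleton_max_succ hbr hzero j.2 i.2)
    exact subset_span ⟨⟨max j.1 i.1 + 1, by omega⟩, hji, rfl⟩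
  have hS_iInf : ⨅ k, S k = ⊥ := by
    rw [hind.iInf_span_image, Set.iInter_eq_empty_iff.mpr fun i => ⟨i.1, lt_irrefl i.1⟩,
      Set.image_empty, span_empty]
  rw [eq_bot_iff, ← LieSubmodule.toSubmodule_le_toSubmodule, LieSubmodule.iInf_toSubmodule,
    LieSubmodule.bot_toSubmodule, ← hS_iInf]
  exact iInf_mono (LieModule.lowerCentralSeries_le_of_lie_mem S hS₀ hstep)
end

section
/- For the Lie algebra 𝔪₀, the quotient L¹/L² of the lower central series is 2-dimensional, and L^i/L^{i+1} is 1-dimensional for every i ≥ 2. -/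
/-!
Write `S m` for the span of the `e n` with `n ≥ m`. The only nonzero brackets of basis vectors
are `⁅e i, e 1⁆ = e (i + 1) = -⁅e 1, e i⁆` for `i ≥ 2`, so `⁅L, S m⁆ = S (max (m + 1) 3)`, and by
induction the `k`-th term of the lower central series (Mathlib's index `k - 1`) is `S (k + 1)` for
`k ≥ 2`. Each quotient is therefore spanned, freely, by the images of the basis vectors left out:
`e 1, e 2` for `L / S 3` and `e (i + 1)` for `S (i + 1) / S (i + 2)`.
-/

open Submodule Set Cardinal

theorem Submodule.span_image_sup_span_image_sdiff {R M ι : Type*} [Semiring R] [AddCommMonoid M]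
    [Module R M] {v : ι → M} {s t : Set ι} (hst : s ⊆ t) :
    span R (v '' s) ⊔ span R (v '' (t \ s)) = span R (v '' t) := by
  rw [← span_union, ← image_union, union_sdiff_cancel hst]

namespace LinearIndepOn

variable {R M ι : Type*} [Ring R] [AddCommGroup M] [Module R M] {v : ι → M} {s t : Set ι}

theorem disjoint_span_image_sdiff (hv : LinearIndepOn R v t) (hst : s ⊆ t) :
    Disjoint (span R (v '' s)) (span R (v '' (t \ s))) := by
  rw [← union_sdiff_cancel hst] at hv
  exact ((linearIndepOn_union_iff disjoint_sdiff_right).1 hv).2.2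

variable [StrongRankCondition R]

theorem rank_span_image (hv : LinearIndepOn R v s) :
    Module.rank R (span R (v '' s)) = #(v '' s) :=
  rank_span_set hv.id_image

theorem rank_quotient_span_image (hv : LinearIndepOn R v t) (ht : span R (v '' t) = ⊤)
    (hst : s ⊆ t) : Module.rank R (M ⧸ span R (v '' s)) = #(v '' (t \ s)) := by
  have hcompl : IsCompl (span R (v '' s)) (span R (v '' (t \ s))) :=
    ⟨hv.disjoint_span_image_sdiff hst,
      codisjoint_iff.2 <| by rw [span_image_sup_span_image_sdiff hst, ht]⟩
  rw [(quotientEquivOfIsCompl _ _ hcompl).rank_eq, (hv.mono sdiff_subset).rank_span_image]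

theorem rank_span_image_quotient_span_image (hv : LinearIndepOn R v t) (hst : s ⊆ t) :
    Module.rank R (span R (v '' t) ⧸ comap (span R (v '' t)).subtype (span R (v '' s))) =
      #(v '' (t \ s)) := by
  -- second isomorphism theorem, with `span (v '' (t \ s)) ⊓ span (v '' s) = ⊥`
  rw [← span_image_sup_span_image_sdiff hst, sup_comm,
    ← (LinearMap.quotientInfEquivSupQuotient _ _).rank_eq,
    disjoint_iff_comap_eq_bot.1 (hv.disjoint_span_image_sdiff hst).symm, inf_bot_eq,
    (quotEquivOfEqBot _ rfl).rank_eq, (hv.mono sdiff_subset).rank_span_image]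

end LinearIndepOn

theorem LieSubmodule.lieIdeal_oper_eq_linear_span_image2 {R L M : Type*} [CommRing R]
    [LieRing L] [LieAlgebra R L] [AddCommGroup M] [Module R M] [LieRingModule L M]
    [LieModule R L M] {I : LieIdeal R L} {N : LieSubmodule R L M} {s : Set L} {t : Set M}
    (hI : I.toSubmodule = span R s) (hN : N.toSubmodule = span R t) :
    ⁅I, N⁆.toSubmodule = span R (image2 (fun x m ↦ ⁅x, m⁆) s t) := by
  have h := map₂_span_span R (LieModule.toEnd R L M : L →ₗ[R] Module.End R M) s t
  rw [← hI, ← hN, map₂_eq_span_image2] at h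
  rw [lieIdeal_oper_eq_linear_span']
  exact h

namespace M0

variable {R L : Type*} [CommRing R] [LieRing L] [LieAlgebra R L] {e : ℕ → L}

theorem span_image2_lie_eq (hbr : ∀ i, 2 ≤ i → ⁅e i, e 1⁆ = e (i + 1))
    (hzero : ∀ i j, 1 ≤ i → 1 ≤ j → i ≠ 1 → j ≠ 1 → ⁅e i, e j⁆ = 0) {m : ℕ} (hm : 1 ≤ m) :
    span R (image2 (fun x y ↦ ⁅x, y⁆) (e '' Ici 1) (e '' Ici m)) =
      span R (e '' Ici (max (m + 1) 3)) := by
  have hbr' : ∀ j, 2 ≤ j → ⁅e 1, e j⁆ = -e (j + 1) := fun j hj ↦ by rw [← lie_skew, hbr j hj]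
  have mem : ∀ k, max (m + 1) 3 ≤ k → e k ∈ span R (e '' Ici (max (m + 1) 3)) :=
    fun k hk ↦ subset_span ⟨k, hk, rfl⟩
  apply le_antisymm <;> rw [span_le]
  · rintro _ ⟨_, ⟨i, hi : 1 ≤ i, rfl⟩, _, ⟨j, hj : m ≤ j, rfl⟩, rfl⟩
    rcases eq_or_ne i 1 with rfl | hi1 <;> rcases eq_or_ne j 1 with rfl | hj1
    · simp
    · simpa [hbr' j (by omega)] using mem (j + 1) (by omega)
    · simpa [hbr i (by omega)] using mem (i + 1) (by omega)
    · simp [hzero i j hi (by omega) hi1 hj1]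
  · rintro _ ⟨k, hk : max (m + 1) 3 ≤ k, rfl⟩
    have hk1 : e k = -⁅e 1, e (k - 1)⁆ := by
      rw [hbr' (k - 1) (by omega), Nat.sub_add_cancel (by omega), neg_neg]
    rw [hk1]
    exact neg_mem <| subset_span
      ⟨e 1, ⟨1, mem_Ici.2 le_rfl, rfl⟩, e (k - 1), ⟨k - 1, mem_Ici.2 (by omega), rfl⟩, rfl⟩

theorem lowerCentralSeries_toSubmodule_eq (hspan : span R (e '' Ici 1) = ⊤)
    (hbr : ∀ i, 2 ≤ i → ⁅e i, e 1⁆ = e (i + 1))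
    (hzero : ∀ i j, 1 ≤ i → 1 ≤ j → i ≠ 1 → j ≠ 1 → ⁅e i, e j⁆ = 0) {k : ℕ} (hk : 1 ≤ k) :
    (LieModule.lowerCentralSeries R L L k).toSubmodule = span R (e '' Ici (k + 2)) := by
  have htop : (⊤ : LieIdeal R L).toSubmodule = span R (e '' Ici 1) := by simp [hspan]
  induction k, hk using Nat.le_induction with
  | base =>
    rw [LieModule.lowerCentralSeries_succ, LieModule.lowerCentralSeries_zero,
      LieSubmodule.lieIdeal_oper_eq_linear_span_image2 htop htop,
      span_image2_lie_eq hbr hzero le_rfl]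
    rfl
  | succ k hk ih =>
    rw [LieModule.lowerCentralSeries_succ,
      LieSubmodule.lieIdeal_oper_eq_linear_span_image2 htop ih,
      span_image2_lie_eq hbr hzero (by omega), show max (k + 2 + 1) 3 = k + 1 + 2 by omega]

end M0

/-- For the Lie algebra 𝔪₀, dim(L¹/L²) = 2 and dim(L^i/L^{i+1}) = 1 for i ≥ 2.
(Here `LieModule.lowerCentralSeries ℂ L L k` is the paper's L^{k+1}, so L^i is the term
with index i−1.) -/
theorem m0_lcs_quotient_dims
    (L : Type*) [LieRing L] [LieAlgebra ℂ L] (e : ℕ → L)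
    (hind : LinearIndependent ℂ (fun i : {n : ℕ // 1 ≤ n} => e i.1))
    (hspan : Submodule.span ℂ (Set.range (fun i : {n : ℕ // 1 ≤ n} => e i.1)) = ⊤)
    (hbr : ∀ i, 2 ≤ i → ⁅e i, e 1⁆ = e (i + 1))
    (hzero : ∀ i j, 1 ≤ i → 1 ≤ j → i ≠ 1 → j ≠ 1 → ⁅e i, e j⁆ = 0) :
    Module.rank ℂ (L ⧸ (LieModule.lowerCentralSeries ℂ L L 1).toSubmodule) = 2 ∧
    ∀ i : ℕ, 2 ≤ i →
      Module.rank ℂ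
        ((LieModule.lowerCentralSeries ℂ L L (i - 1)).toSubmodule ⧸
          Submodule.comap ((LieModule.lowerCentralSeries ℂ L L (i - 1)).toSubmodule).subtype
            (LieModule.lowerCentralSeries ℂ L L i).toSubmodule) = 1 := by
  have hind' : LinearIndepOn ℂ e (Ici 1) := hind
  have hspan' : span ℂ (e '' Ici 1) = ⊤ := by rwa [image_eq_range]
  have lcs {k : ℕ} (hk : 1 ≤ k) := M0.lowerCentralSeries_toSubmodule_eq hspan' hbr hzero hk
  refine ⟨?_, fun i hi ↦ ?_⟩
  · rw [lcs le_rfl, hind'.rank_quotient_span_image hspan' (Ici_subset_Ici.2 (by norm_num)),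
      show Ici 1 \ Ici 3 = {1, 2} by ext; simp; omega, image_pair, mk_insert, mk_singleton]
    · norm_num
    · simpa using hind'.injOn.ne (by simp) (by simp) (by norm_num)
  · rw [lcs (show 1 ≤ i - 1 by omega), lcs (show 1 ≤ i by omega), show i - 1 + 2 = i + 1 by omega,
      (hind'.mono (Ici_subset_Ici.2 (by omega))).rank_span_image_quotient_span_image
        (Ici_subset_Ici.2 (by omega)),
      show Ici (i + 1) \ Ici (i + 2) = {i + 1} by ext; simp; omega, image_singleton, mk_singleton]
end

section
/- Let d be a derivation of 𝔪₀ with d(e₁) = Σ_{i=1}^{t} αᵢ eᵢ and d(e_k) = ((k−2)α₁ + β₂) e_k + Σ_{i=3}^{t} βᵢ e_{i+k−2} for k ≥ 2. If α₁ = β₂ = 0, then d is potentially nilpotent, i.e. ⋂_{k≥1} Im(d^k) = 0. -/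
/-!
With `α₁ = β₂ = 0` the derivation sends each basis vector `eᵢ` into the span of the `eⱼ` with
`j > i`. Hence `d` raises the filtration `Fₙ = span {eⱼ | j ≥ n}` by one step, so `Im (d^k) ⊆ F_k`,
and the `Fₙ` intersect in `0` because every vector has only finitely many nonzero coordinates.
-/

namespace Module.Basis

variable {ι R M : Type*} [Semiring R] [AddCommMonoid M] [Module R M]
  (b : Basis ι R M) (deg : ι → ℕ)

def degreeFiltration (n : ℕ) : Submodule R M :=
  Submodule.span R (b '' {i | n ≤ deg i})

theorem degreeFiltration_antitone : Antitone (b.degreeFiltration deg) :=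
  fun _ _ hnm => Submodule.span_mono (Set.image_mono fun _ hi => le_trans hnm hi)

theorem degreeFiltration_zero : b.degreeFiltration deg 0 = ⊤ := by
  simp [degreeFiltration, b.span_eq]

theorem mem_degreeFiltration_of_le {n : ℕ} {i : ι} (h : n ≤ deg i) :
    b i ∈ b.degreeFiltration deg n :=
  Submodule.subset_span ⟨i, h, rfl⟩

theorem iInf_degreeFiltration : ⨅ n, b.degreeFiltration deg n = ⊥ := by
  refine eq_bot_iff.mpr fun x hx => (Submodule.mem_bot R).mpr (b.repr.injective ?_)
  ext j
  have hsupp := b.mem_span_image.mp ((Submodule.mem_iInf _).mp hx (deg j + 1))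
  by_contra hj
  exact (deg j).lt_irrefl (hsupp (Finsupp.mem_support_iff.mpr (by simpa using hj)))

variable {b deg} {f : Module.End R M}

theorem degreeFiltration_le_comap
    (hf : ∀ i, f (b i) ∈ b.degreeFiltration deg (deg i + 1)) (n : ℕ) :
    b.degreeFiltration deg n ≤ (b.degreeFiltration deg (n + 1)).comap f :=
  Submodule.span_le.mpr <| Set.image_subset_iff.mpr fun i hi =>
    b.degreeFiltration_antitone deg (Nat.succ_le_succ hi) (hf i)

theorem range_pow_le_degreeFiltration
    (hf : ∀ i, f (b i) ∈ b.degreeFiltration deg (deg i + 1)) (k : ℕ) :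
    LinearMap.range (f ^ k) ≤ b.degreeFiltration deg k := by
  induction k with
  | zero => simp [degreeFiltration_zero]
  | succ k ih =>
    rw [pow_succ', Module.End.mul_eq_comp, LinearMap.range_comp, Submodule.map_le_iff_le_comap]
    exact ih.trans (degreeFiltration_le_comap hf k)

theorem iInf_range_pow_succ_eq_bot
    (hf : ∀ i, f (b i) ∈ b.degreeFiltration deg (deg i + 1)) :
    ⨅ k : ℕ, LinearMap.range (f ^ (k + 1)) = ⊥ :=
  eq_bot_iff.mpr <| (b.iInf_degreeFiltration deg).symm ▸ iInf_mono fun k =>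
    (range_pow_le_degreeFiltration hf (k + 1)).trans
      (b.degreeFiltration_antitone deg k.le_succ)

end Module.Basis

theorem m0_derivation_potentially_nilpotent_general
    (L : Type*) [LieRing L] [LieAlgebra ℂ L] (e : ℕ → L)
    (hind : LinearIndependent ℂ (fun i : {n : ℕ // 1 ≤ n} => e i.1))
    (hspan : Submodule.span ℂ (Set.range (fun i : {n : ℕ // 1 ≤ n} => e i.1)) = ⊤)
    (d : Module.End ℂ L)
    (t : ℕ) (α β : ℕ → ℂ)
    (hα : α 1 = 0) (hβ : β 2 = 0)
    (hd1 : d (e 1) = ∑ i ∈ Finset.Icc 1 t, α i • e i)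
    (hdk : ∀ k, 2 ≤ k →
      d (e k) = (((k : ℂ) - 2) * α 1 + β 2) • e k
        + ∑ i ∈ Finset.Icc 3 t, β i • e (i + k - 2)) :
    ⨅ k : ℕ, LinearMap.range (d ^ (k + 1)) = ⊥ := by
  set b := Module.Basis.mk hind hspan.ge
  have he_mem : ∀ n (hn : 1 ≤ n) m, m ≤ n → e n ∈ b.degreeFiltration Subtype.val m :=
    fun n hn _ hm => Module.Basis.mk_apply hind hspan.ge ⟨n, hn⟩ ▸
      b.mem_degreeFiltration_of_le Subtype.val (i := ⟨n, hn⟩) hm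
  refine Module.Basis.iInf_range_pow_succ_eq_bot (b := b) (deg := Subtype.val) fun ⟨i, hi⟩ => ?_
  rw [show b ⟨i, hi⟩ = e i from Module.Basis.mk_apply hind hspan.ge _]
  change d (e i) ∈ b.degreeFiltration Subtype.val (i + 1)
  obtain rfl | hi2 := hi.eq_or_lt
  · rw [hd1]
    refine Submodule.sum_mem _ fun j hj => ?_
    obtain rfl | hj2 := (Finset.mem_Icc.mp hj).1.eq_or_lt
    · simp [hα]
    · exact Submodule.smul_mem _ _ (he_mem j hj2.le _ hj2)
  · rw [hdk i hi2, hα, hβ, mul_zero, add_zero, zero_smul, zero_add]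
    refine Submodule.sum_mem _ fun j hj => Submodule.smul_mem _ _ ?_
    have hj3 := (Finset.mem_Icc.mp hj).1
    exact he_mem _ (by omega) _ (by omega)

/-- A derivation d of 𝔪₀ of the standard form with α₁ = β₂ = 0 is potentially
nilpotent: ⋂_{k≥1} Im(d^k) = 0. -/
theorem m0_derivation_potentially_nilpotent
    (L : Type*) [LieRing L] [LieAlgebra ℂ L] (e : ℕ → L)
    (hind : LinearIndependent ℂ (fun i : {n : ℕ // 1 ≤ n} => e i.1))
    (hspan : Submodule.span ℂ (Set.range (fun i : {n : ℕ // 1 ≤ n} => e i.1)) = ⊤)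
    (hbr : ∀ i, 2 ≤ i → ⁅e i, e 1⁆ = e (i + 1))
    (hzero : ∀ i j, 1 ≤ i → 1 ≤ j → i ≠ 1 → j ≠ 1 → ⁅e i, e j⁆ = 0)
    (d : Module.End ℂ L)
    (hd : ∀ a b : L, d ⁅a, b⁆ = ⁅d a, b⁆ + ⁅a, d b⁆)
    (t : ℕ) (α β : ℕ → ℂ)
    (hα : α 1 = 0) (hβ : β 2 = 0)
    (hd1 : d (e 1) = ∑ i ∈ Finset.Icc 1 t, α i • e i)
    (hdk : ∀ k, 2 ≤ k →
      d (e k) = (((k : ℂ) - 2) * α 1 + β 2) • e k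
        + ∑ i ∈ Finset.Icc 3 t, β i • e (i + k - 2)) :
    ⨅ k : ℕ, LinearMap.range (d ^ (k + 1)) = ⊥ :=
  m0_derivation_potentially_nilpotent_general L e hind hspan d t α β hα hβ hd1 hdk
end

section
/- The center of the Lie algebra M̃₀ is trivial. -/
/-!
If `z = a x + b y + ∑ cₙ eₙ` is central, then `0 = [e₁, z] = a e₁ - ∑_{n ≥ 2} cₙ eₙ₊₁`. Since
`ad e₁` moves basis vectors injectively to multiples of basis vectors, this forces `a = 0` and
`cₙ = 0` for `n ≥ 2`. What is left, `z = b y + c₁ e₁`, satisfies `0 = [e₂, z] = b e₂ + c₁ e₃`,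
so `b = c₁ = 0`.
-/

open Module

theorem Module.Basis.repr_map_apply_of_map_basis_eq_smul {ι κ R M N : Type*} [CommSemiring R]
    [AddCommMonoid M] [Module R M] [AddCommMonoid N] [Module R N]
    (B : Basis ι R M) (B' : Basis κ R N) {f : M →ₗ[R] N} {c : ι → R} {σ : ι → κ}
    (hσ : σ.Injective) (hf : ∀ i, f (B i) = c i • B' (σ i)) (z : M) (i : ι) :
    B'.repr (f z) (σ i) = c i * B.repr z i := by
  have : B'.coord (σ i) ∘ₗ f = c i • B.coord i := B.ext fun k => by
    by_cases hk : k = i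
    · simp [hf, hk]
    · simp [hf, hk, hσ.eq_iff]
  exact LinearMap.congr_fun this z

namespace M0Tilde

abbrev Index := Unit ⊕ Unit ⊕ {n : ℕ // 1 ≤ n}

def family {L : Type*} (x y : L) (e : ℕ → L) : Index → L :=
  Sum.elim (fun _ => x) (Sum.elim (fun _ => y) (fun n => e n))

/-- `ad e₁` sends `x ↦ e₁`, `eₙ ↦ -eₙ₊₁` for `n ≥ 2`, and kills `y` and `e₁`; these two are sent
to the unused slots `y` and `e₂` so that the shift stays injective. -/
def shift : Index → Index
  | .inl _ => .inr (.inr ⟨1, le_rfl⟩)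
  | .inr (.inl _) => .inr (.inl ())
  | .inr (.inr n) => .inr (.inr ⟨n.1 + 1, Nat.le_add_left 1 n.1⟩)

def shiftCoeff : Index → ℂ
  | .inl _ => 1
  | .inr (.inl _) => 0
  | .inr (.inr n) => if n.1 = 1 then 0 else -1

lemma shift_injective : shift.Injective := by
  rintro (_ | _ | ⟨m, hm⟩) (_ | _ | ⟨n, hn⟩) h <;>
    simp only [shift, Sum.inr.injEq, Subtype.mk.injEq, reduceCtorEq] at h ⊢ <;> omega

variable {L : Type*} [LieRing L] [LieAlgebra ℂ L] {x y : L} {e : ℕ → L}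

lemma lie_e_one_family (hbr : ∀ i, 2 ≤ i → ⁅e i, e 1⁆ = e (i + 1))
    (hx1 : ⁅x, e 1⁆ = -e 1) (hy1 : ⁅y, e 1⁆ = 0) (i : Index) :
    ⁅e 1, family x y e i⁆ = shiftCoeff i • family x y e (shift i) := by
  rcases i with _ | _ | ⟨n, hn⟩
  · show ⁅e 1, x⁆ = (1 : ℂ) • e 1
    rw [← lie_skew, hx1, neg_neg, one_smul]
  · show ⁅e 1, y⁆ = (0 : ℂ) • y
    rw [← lie_skew, hy1, neg_zero, zero_smul]
  · rcases hn.eq_or_lt with rfl | hn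
    · show ⁅e 1, e 1⁆ = (0 : ℂ) • e 2
      rw [lie_self, zero_smul]
    · show ⁅e 1, e n⁆ = (if n = 1 then 0 else -1 : ℂ) • e (n + 1)
      rw [if_neg hn.ne', ← lie_skew, hbr n hn, neg_one_smul]

lemma exists_eq_smul_add_smul_of_lie_e_one_eq_zero (hind : LinearIndependent ℂ (family x y e))
    (hspan : Submodule.span ℂ (Set.range (family x y e)) = ⊤)
    (hbr : ∀ i, 2 ≤ i → ⁅e i, e 1⁆ = e (i + 1)) (hx1 : ⁅x, e 1⁆ = -e 1) (hy1 : ⁅y, e 1⁆ = 0)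
    {z : L} (hz : ⁅e 1, z⁆ = 0) : ∃ b c : ℂ, z = b • y + c • e 1 := by
  let B : Basis Index ℂ L := .mk hind hspan.ge
  have hB : ⇑B = family x y e := Basis.coe_mk hind hspan.ge
  have hvanish (i : Index) (hi : shiftCoeff i ≠ 0) : B.repr z i = 0 := by
    have := B.repr_map_apply_of_map_basis_eq_smul B (f := LieAlgebra.ad ℂ L (e 1)) shift_injective
      (by simpa [hB] using lie_e_one_family hbr hx1 hy1) z i
    simpa [hz, hi] using this.symm
  obtain ⟨b, c, hrepr⟩ : ∃ b c : ℂ,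
      B.repr z = .single (.inr (.inl ())) b + .single (.inr (.inr ⟨1, le_rfl⟩)) c := by
    refine ⟨B.repr z (.inr (.inl ())), B.repr z (.inr (.inr ⟨1, le_rfl⟩)), Finsupp.ext ?_⟩
    rintro (_ | _ | ⟨n, hn⟩)
    · simpa using hvanish (.inl ()) (by simp [shiftCoeff])
    · simp
    · rcases hn.eq_or_lt with rfl | hn
      · simp
      · rw [hvanish _ (by simp [shiftCoeff, hn.ne'])]
        -- plain `simp` would rewrite `⟨1, _⟩ : {n // 1 ≤ n}` to the numeral `(1 : ℕ+)`
        simp only [Finsupp.add_apply, Finsupp.single_apply, Sum.inr.injEq, Subtype.mk.injEq,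
          reduceCtorEq, hn.ne, if_false, add_zero]
  refine ⟨b, c, ?_⟩
  rw [← B.repr.symm_apply_apply z, hrepr, map_add, B.repr_symm_single, B.repr_symm_single, hB]
  rfl

end M0Tilde

open M0Tilde in
theorem M0Tilde_center_trivial_general
    (L : Type*) [LieRing L] [LieAlgebra ℂ L] (x y : L) (e : ℕ → L)
    (hind : LinearIndependent ℂ
      (Sum.elim (fun _ : Unit => x)
        (Sum.elim (fun _ : Unit => y) (fun i : {n : ℕ // 1 ≤ n} => e i.1))))
    (hspan : Submodule.span ℂ (Set.range
      (Sum.elim (fun _ : Unit => x)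
        (Sum.elim (fun _ : Unit => y) (fun i : {n : ℕ // 1 ≤ n} => e i.1)))) = ⊤)
    (hbr : ∀ i, 2 ≤ i → ⁅e i, e 1⁆ = e (i + 1))
    (hx1 : ⁅x, e 1⁆ = -e 1)
    (hyi : ∀ i, 2 ≤ i → ⁅y, e i⁆ = -e i)
    (hy1 : ⁅y, e 1⁆ = 0) :
    LieAlgebra.center ℂ L = ⊥ := by
  refine (LieSubmodule.eq_bot_iff _).2 fun z hz => ?_
  have hcentral : ∀ w, ⁅w, z⁆ = 0 := (LieModule.mem_maxTrivSubmodule ℂ L L z).1 hz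
  obtain ⟨b, c, rfl⟩ :=
    exists_eq_smul_add_smul_of_lie_e_one_eq_zero hind hspan hbr hx1 hy1 (hcentral (e 1))
  have hlie : b • e 2 + c • e 3 = 0 := by
    rw [← hcentral (e 2), lie_add, lie_smul, lie_smul, ← lie_skew, hyi 2 le_rfl, neg_neg,
      hbr 2 le_rfl]
  have hpair : LinearIndependent ℂ ![e 2, e 3] := by
    convert hind.comp ![.inr (.inr ⟨2, by norm_num⟩), .inr (.inr ⟨3, by norm_num⟩)]
      (injective_pair_iff_ne.2 (by simp only [ne_eq, Sum.inr.injEq, Subtype.mk.injEq]; omega))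
    ext i; fin_cases i <;> rfl
  obtain ⟨rfl, rfl⟩ := LinearIndependent.pair_iff.1 hpair b c hlie
  simp

/-- The center of the Lie algebra M̃₀ is trivial. -/
theorem M0Tilde_center_trivial
    (L : Type*) [LieRing L] [LieAlgebra ℂ L] (x y : L) (e : ℕ → L)
    (hind : LinearIndependent ℂ
      (Sum.elim (fun _ : Unit => x)
        (Sum.elim (fun _ : Unit => y) (fun i : {n : ℕ // 1 ≤ n} => e i.1))))
    (hspan : Submodule.span ℂ (Set.range
      (Sum.elim (fun _ : Unit => x)
        (Sum.elim (fun _ : Unit => y) (fun i : {n : ℕ // 1 ≤ n} => e i.1)))) = ⊤)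
    (hbr : ∀ i, 2 ≤ i → ⁅e i, e 1⁆ = e (i + 1))
    (hzero : ∀ i j, 1 ≤ i → 1 ≤ j → i ≠ 1 → j ≠ 1 → ⁅e i, e j⁆ = 0)
    (hx1 : ⁅x, e 1⁆ = -e 1)
    (hxi : ∀ i, 2 ≤ i → ⁅x, e i⁆ = (-(((i : ℂ)) - 1)) • e i)
    (hyi : ∀ i, 2 ≤ i → ⁅y, e i⁆ = -e i)
    (hy1 : ⁅y, e 1⁆ = 0)
    (hxy : ⁅x, y⁆ = 0) :
    LieAlgebra.center ℂ L = ⊥ :=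
  M0Tilde_center_trivial_general L x y e hind hspan hbr hx1 hyi hy1
end

section
/- The center of the Lie algebra M̃₂ is trivial. -/
/-!
The grading element `x` acts diagonally on the basis `x, e₁, e₂, …`, with eigenvalue `0` on `x`
and `-i ≠ 0` on `eᵢ`. A central element is killed by `ad x`, so all its `eᵢ`-coordinates vanish
and it is a multiple `c • x`; then `0 = ⁅e₁, c • x⁆ = c • e₁` forces `c = 0`.
-/

namespace Module.Basis

variable {ι R M : Type*} [CommSemiring R] [AddCommMonoid M] [Module R M]

theorem repr_apply_of_apply_eq_smul (b : Basis ι R M) {f : M →ₗ[R] M} {d : ι → R}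
    (hf : ∀ i, f (b i) = d i • b i) (z : M) (i : ι) :
    b.repr (f z) i = d i * b.repr z i := by
  have key : Finsupp.lapply i ∘ₗ b.repr.toLinearMap ∘ₗ f
      = d i • (Finsupp.lapply i ∘ₗ b.repr.toLinearMap) := b.ext fun j => by
    obtain rfl | hji := eq_or_ne j i <;> simp [*]
  exact LinearMap.congr_fun key z

theorem eq_repr_smul_of_repr_eq_zero (b : Basis ι R M) {z : M} {i : ι}
    (hz : ∀ j, j ≠ i → b.repr z j = 0) : z = b.repr z i • b i :=
  b.repr.injective <| Finsupp.ext fun j => by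
    obtain rfl | hji := eq_or_ne j i <;> simp [Finsupp.single_eq_of_ne, *]

theorem eq_repr_smul_of_apply_eq_zero [NoZeroDivisors R] (b : Basis ι R M) {f : M →ₗ[R] M}
    {d : ι → R} (hf : ∀ i, f (b i) = d i • b i) {i : ι} (hd : ∀ j, j ≠ i → d j ≠ 0) {z : M}
    (hz : f z = 0) : z = b.repr z i • b i := by
  refine b.eq_repr_smul_of_repr_eq_zero fun j hj => ?_
  have hrepr := b.repr_apply_of_apply_eq_smul hf z j
  rw [hz, map_zero, Finsupp.zero_apply, eq_comm] at hrepr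
  exact (mul_eq_zero.mp hrepr).resolve_left (hd j hj)

end Module.Basis

theorem M2Tilde_center_trivial_general
    (L : Type*) [LieRing L] [LieAlgebra ℂ L] (x : L) (e : ℕ → L)
    (hind : LinearIndependent ℂ
      (Sum.elim (fun _ : Unit => x) (fun i : {n : ℕ // 1 ≤ n} => e i.1)))
    (hspan : Submodule.span ℂ (Set.range
      (Sum.elim (fun _ : Unit => x) (fun i : {n : ℕ // 1 ≤ n} => e i.1))) = ⊤)
    (hx1 : ⁅x, e 1⁆ = -e 1)
    (hxi : ∀ i, 2 ≤ i → ⁅x, e i⁆ = (-(i : ℂ)) • e i) :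
    LieAlgebra.center ℂ L = ⊥ := by
  let b := Module.Basis.mk hind hspan.ge
  have hb : ∀ j, b j = Sum.elim (fun _ : Unit => x) (fun i : {n : ℕ // 1 ≤ n} => e i.1) j :=
    Module.Basis.mk_apply hind _
  let d := Sum.elim (fun _ : Unit => (0 : ℂ)) (fun i : {n : ℕ // 1 ≤ n} => -(i.1 : ℂ))
  have had_x : ∀ j, LieAlgebra.ad ℂ L x (b j) = d j • b j := by
    rintro (⟨⟩ | ⟨i, hi⟩)
    · simp [hb, d]
    · simp only [hb, d, Sum.elim_inr, LieAlgebra.ad_apply]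
      obtain rfl | hi := hi.eq_or_lt
      · simp [hx1]
      · exact hxi i hi
  have hd : ∀ j, j ≠ Sum.inl () → d j ≠ 0 := by
    rintro (⟨⟩ | ⟨i, hi⟩) hj
    · exact absurd rfl hj
    · simp only [d, Sum.elim_inr, ne_eq, neg_eq_zero, Nat.cast_eq_zero]
      omega
  refine (LieSubmodule.eq_bot_iff _).mpr fun z hz => ?_
  have hcomm : ∀ a : L, ⁅a, z⁆ = 0 := (LieModule.mem_maxTrivSubmodule ℂ L L z).mp hz
  have hzx : z = b.repr z (Sum.inl ()) • x :=
    (b.eq_repr_smul_of_apply_eq_zero had_x hd (hcomm x)).trans (by rw [hb]; rfl)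
  have he1 : e 1 ≠ 0 := by simpa only [hb, Sum.elim_inr] using b.ne_zero (Sum.inr ⟨1, le_rfl⟩)
  have hcomm_e1 := hcomm (e 1)
  rw [hzx, lie_smul, ← lie_skew, hx1, neg_neg, smul_eq_zero] at hcomm_e1
  rw [hzx, hcomm_e1.resolve_right he1, zero_smul]

/-- The center of the Lie algebra M̃₂ is trivial. -/
theorem M2Tilde_center_trivial
    (L : Type*) [LieRing L] [LieAlgebra ℂ L] (x : L) (e : ℕ → L)
    (hind : LinearIndependent ℂ
      (Sum.elim (fun _ : Unit => x) (fun i : {n : ℕ // 1 ≤ n} => e i.1)))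
    (hspan : Submodule.span ℂ (Set.range
      (Sum.elim (fun _ : Unit => x) (fun i : {n : ℕ // 1 ≤ n} => e i.1))) = ⊤)
    (hbr1 : ∀ i, 2 ≤ i → ⁅e 1, e i⁆ = e (i + 1))
    (hbr2 : ∀ j, 3 ≤ j → ⁅e 2, e j⁆ = e (j + 2))
    (hzero : ∀ i j, 3 ≤ i → 3 ≤ j → ⁅e i, e j⁆ = 0)
    (hx1 : ⁅x, e 1⁆ = -e 1)
    (hxi : ∀ i, 2 ≤ i → ⁅x, e i⁆ = (-(i : ℂ)) • e i) :
    LieAlgebra.center ℂ L = ⊥ :=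
  M2Tilde_center_trivial_general L x e hind hspan hx1 hxi
end

section
/- Every derivation d of the Lie algebra M̃₀ has the form: there exist scalars α₁, α₃, …, α_n, β₂, β₃ with d(e₁) = α₁ e₁ + Σ_{i=3}^{n} αᵢ eᵢ, d(eᵢ) = ((i−2)α₁ + β₂) eᵢ + β₃ e_{i+1} for i ≥ 2, d(x) = −β₃ e₁ + Σ_{i=2}^{n−1} (i−1) α_{i+1} eᵢ, and d(y) = Σ_{i=2}^{n−1} α_{i+1} eᵢ. -/
/-!
In the basis `x, y, e₁, e₂, …` the operators `ad x` and `ad y` are diagonal and `ad e₁` shifts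
`eₖ` to `eₖ₊₁`, so bracket identities can be compared coordinate by coordinate. Every `eₖ` is a
bracket and `[M̃₀, M̃₀]` lies in the span of the `eₖ`, hence so do `d e₁` and `d e₂`. Applying `d`
to the eigenvector relations `[y, e₁] = 0`, `[x, e₁] = -e₁`, `[y, e₂] = [x, e₂] = -e₂` and
comparing coordinates gives `d e₂ = β₂ e₂ + β₃ e₃` and expresses every coordinate of `d x` and
`d y` through `β₃` and the coordinates `αₖ` of `d e₁`; the relation `eᵢ₊₁ = [eᵢ, e₁]` then
propagates `d e₂` to all `d eᵢ`. The sums are finite because `d e₁` has finite support.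
-/

open Finset

theorem LieDerivation.lie_apply_sub_smul_of_lie_eq_smul {R L : Type*} [CommRing R] [LieRing L]
    [LieAlgebra R L] (D : LieDerivation R L L) {h a : L} {c : R} (hc : ⁅h, a⁆ = c • a) :
    ⁅h, D a⁆ - c • D a = ⁅a, D h⁆ := by
  have hD := D.apply_lie_eq_add h a
  rw [hc, map_smul] at hD
  rw [hD, sub_add_cancel_left, lie_skew]

structure M0TildeBasis (K L : Type*) [Field K] [LieRing L] [LieAlgebra K L] where
  x : L
  y : L
  e : ℕ → L
  basis : Module.Basis (Unit ⊕ Unit ⊕ {n : ℕ // 1 ≤ n}) K L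
  basis_inl : basis (.inl ()) = x
  basis_inr_inl : basis (.inr (.inl ())) = y
  basis_inr_inr (k : ℕ) (hk : 1 ≤ k) : basis (.inr (.inr ⟨k, hk⟩)) = e k
  lie_e_e_one (i : ℕ) (hi : 2 ≤ i) : ⁅e i, e 1⁆ = e (i + 1)
  lie_e_e (i j : ℕ) (hi : 2 ≤ i) (hj : 2 ≤ j) : ⁅e i, e j⁆ = 0
  lie_x_e_one : ⁅x, e 1⁆ = -e 1
  lie_x_e (i : ℕ) (hi : 2 ≤ i) : ⁅x, e i⁆ = -((i : K) - 1) • e i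
  lie_y_e_one : ⁅y, e 1⁆ = 0
  lie_y_e (i : ℕ) (hi : 2 ≤ i) : ⁅y, e i⁆ = -e i
  lie_x_y : ⁅x, y⁆ = 0

namespace M0TildeBasis

attribute [simp] lie_e_e_one lie_e_e lie_x_e_one lie_x_e lie_y_e_one lie_y_e lie_x_y

variable {K L : Type*} [Field K] [LieRing L] [LieAlgebra K L] (M : M0TildeBasis K L)

@[simp] lemma lie_y_x : ⁅M.y, M.x⁆ = 0 := by rw [← lie_skew, M.lie_x_y, neg_zero]

@[simp] lemma lie_e_one_x : ⁅M.e 1, M.x⁆ = M.e 1 := by rw [← lie_skew, M.lie_x_e_one, neg_neg]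

@[simp] lemma lie_e_x {i : ℕ} (hi : 2 ≤ i) : ⁅M.e i, M.x⁆ = ((i : K) - 1) • M.e i := by
  rw [← lie_skew, M.lie_x_e i hi, neg_smul, neg_neg]

@[simp] lemma lie_e_one_y : ⁅M.e 1, M.y⁆ = 0 := by rw [← lie_skew, M.lie_y_e_one, neg_zero]

@[simp] lemma lie_e_y {i : ℕ} (hi : 2 ≤ i) : ⁅M.e i, M.y⁆ = M.e i := by
  rw [← lie_skew, M.lie_y_e i hi, neg_neg]

@[simp] lemma lie_e_one_e {i : ℕ} (hi : 2 ≤ i) : ⁅M.e 1, M.e i⁆ = -M.e (i + 1) := by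
  rw [← lie_skew, M.lie_e_e_one i hi]

noncomputable def coordX : L →ₗ[K] K := M.basis.coord (.inl ())

noncomputable def coordY : L →ₗ[K] K := M.basis.coord (.inr (.inl ()))

/-- `M.e 0` is not a basis vector: `M.coordE 0` is the junk value `0`. -/
noncomputable def coordE (k : ℕ) : L →ₗ[K] K :=
  if hk : 1 ≤ k then M.basis.coord (.inr (.inr ⟨k, hk⟩)) else 0

lemma coordE_of_one_le {k : ℕ} (hk : 1 ≤ k) :
    M.coordE k = M.basis.coord (.inr (.inr ⟨k, hk⟩)) :=
  dif_pos hk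

@[simp] lemma coordX_x : M.coordX M.x = 1 := by simp [coordX, ← M.basis_inl]
@[simp] lemma coordY_x : M.coordY M.x = 0 := by simp [coordY, ← M.basis_inl]
@[simp] lemma coordE_x (k : ℕ) : M.coordE k M.x = 0 := by
  unfold coordE; split_ifs <;> simp [← M.basis_inl]
@[simp] lemma coordX_y : M.coordX M.y = 0 := by simp [coordX, ← M.basis_inr_inl]
@[simp] lemma coordY_y : M.coordY M.y = 1 := by simp [coordY, ← M.basis_inr_inl]
@[simp] lemma coordE_y (k : ℕ) : M.coordE k M.y = 0 := by
  unfold coordE; split_ifs <;> simp [← M.basis_inr_inl]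
@[simp] lemma coordX_e {k : ℕ} (hk : 1 ≤ k) : M.coordX (M.e k) = 0 := by
  simp [coordX, ← M.basis_inr_inr k hk]
@[simp] lemma coordY_e {k : ℕ} (hk : 1 ≤ k) : M.coordY (M.e k) = 0 := by
  simp [coordY, ← M.basis_inr_inr k hk]
@[simp] lemma coordE_e_self {k : ℕ} (hk : 1 ≤ k) : M.coordE k (M.e k) = 1 := by
  simp [M.coordE_of_one_le hk, ← M.basis_inr_inr k hk]
@[simp] lemma coordE_e_of_ne {k m : ℕ} (hm : 1 ≤ m) (hkm : k ≠ m) :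
    M.coordE k (M.e m) = 0 := by
  unfold coordE
  split_ifs with hk
  · simp [← M.basis_inr_inr m hm, Ne.symm hkm]
  · rfl

lemma hom_ext {N : Type*} [AddCommGroup N] [Module K N] {φ ψ : L →ₗ[K] N}
    (hx : φ M.x = ψ M.x) (hy : φ M.y = ψ M.y) (he₁ : φ (M.e 1) = ψ (M.e 1))
    (he : ∀ k, 2 ≤ k → φ (M.e k) = ψ (M.e k)) : φ = ψ := by
  refine M.basis.ext ?_
  rintro (_ | _ | ⟨k, hk⟩)
  · rwa [M.basis_inl]
  · rwa [M.basis_inr_inl]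
  · rw [M.basis_inr_inr k hk]
    obtain rfl | hk := (show k = 1 ∨ 2 ≤ k by omega)
    exacts [he₁, he k hk]

lemma apply_eq_of_basis {N : Type*} [AddCommGroup N] [Module K N] {φ ψ : L →ₗ[K] N}
    (hx : φ M.x = ψ M.x) (hy : φ M.y = ψ M.y) (he₁ : φ (M.e 1) = ψ (M.e 1))
    (he : ∀ k, 2 ≤ k → φ (M.e k) = ψ (M.e k)) (v : L) : φ v = ψ v :=
  LinearMap.congr_fun (M.hom_ext hx hy he₁ he) v

/-- The derived algebra lies in the span of the `e k`. -/
lemma apply_lie_eq_zero {N : Type*} [AddCommGroup N] [Module K N] (φ : L →ₗ[K] N)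
    (hφ : ∀ k, 1 ≤ k → φ (M.e k) = 0) (a b : L) : φ ⁅a, b⁆ = 0 := by
  have hbasis : (LieModule.toEnd K L L : L →ₗ[K] Module.End K L).compr₂ φ = 0 := by
    refine M.hom_ext ?_ ?_ ?_ fun m hm => ?_ <;> refine M.hom_ext ?_ ?_ ?_ fun n hn => ?_ <;>
      simp (disch := omega) [*]
  exact LinearMap.congr_fun (LinearMap.congr_fun hbasis a) b

lemma eq_of_coord_eq {v w : L} (hx : M.coordX v = M.coordX w)
    (hy : M.coordY v = M.coordY w) (he : ∀ k, 1 ≤ k → M.coordE k v = M.coordE k w) :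
    v = w := by
  refine M.basis.ext_elem fun i => ?_
  rcases i with _ | _ | ⟨k, hk⟩
  · exact hx
  · exact hy
  · simpa [M.coordE_of_one_le hk] using he k hk

lemma coordE_one_lie_x (v : L) : M.coordE 1 ⁅M.x, v⁆ = -M.coordE 1 v :=
  M.apply_eq_of_basis (φ := M.coordE 1 ∘ₗ LieAlgebra.ad K L M.x) (ψ := -M.coordE 1)
    (by simp) (by simp) (by simp) (fun m hm => by simp (disch := omega)) v

lemma coordE_lie_x {k : ℕ} (hk : 2 ≤ k) (v : L) :
    M.coordE k ⁅M.x, v⁆ = -((k : K) - 1) * M.coordE k v :=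
  M.apply_eq_of_basis (φ := M.coordE k ∘ₗ LieAlgebra.ad K L M.x)
    (ψ := -((k : K) - 1) • M.coordE k)
    (by simp) (by simp) (by simp (disch := omega))
    (fun m hm => by obtain rfl | hkm := eq_or_ne k m <;> simp (disch := omega) [*]) v

lemma coordE_one_lie_y (v : L) : M.coordE 1 ⁅M.y, v⁆ = 0 :=
  M.apply_eq_of_basis (φ := M.coordE 1 ∘ₗ LieAlgebra.ad K L M.y) (ψ := 0)
    (by simp) (by simp) (by simp) (fun m hm => by simp (disch := omega)) v

lemma coordE_lie_y {k : ℕ} (hk : 2 ≤ k) (v : L) : M.coordE k ⁅M.y, v⁆ = -M.coordE k v :=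
  M.apply_eq_of_basis (φ := M.coordE k ∘ₗ LieAlgebra.ad K L M.y) (ψ := -M.coordE k)
    (by simp) (by simp) (by simp (disch := omega))
    (fun m hm => by obtain rfl | hkm := eq_or_ne k m <;> simp (disch := omega) [*]) v

lemma coordE_one_lie_e_one (v : L) : M.coordE 1 ⁅M.e 1, v⁆ = M.coordX v :=
  M.apply_eq_of_basis (φ := M.coordE 1 ∘ₗ LieAlgebra.ad K L (M.e 1)) (ψ := M.coordX)
    (by simp) (by simp) (by simp) (fun m hm => by simp (disch := omega)) v

lemma coordE_two_lie_e_one (v : L) : M.coordE 2 ⁅M.e 1, v⁆ = 0 :=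
  M.apply_eq_of_basis (φ := M.coordE 2 ∘ₗ LieAlgebra.ad K L (M.e 1)) (ψ := 0)
    (by simp) (by simp) (by simp) (fun m hm => by simp (disch := omega)) v

lemma coordE_succ_lie_e_one {k : ℕ} (hk : 2 ≤ k) (v : L) :
    M.coordE (k + 1) ⁅M.e 1, v⁆ = -M.coordE k v :=
  M.apply_eq_of_basis (φ := M.coordE (k + 1) ∘ₗ LieAlgebra.ad K L (M.e 1)) (ψ := -M.coordE k)
    (by simp (disch := omega)) (by simp) (by simp (disch := omega))
    (fun m hm => by obtain rfl | hkm := eq_or_ne k m <;> simp (disch := omega) [*]) v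

lemma lie_e_eq {i : ℕ} (hi : 2 ≤ i) (v : L) :
    ⁅M.e i, v⁆ =
      (((i : K) - 1) * M.coordX v + M.coordY v) • M.e i + M.coordE 1 v • M.e (i + 1) :=
  M.apply_eq_of_basis (φ := LieAlgebra.ad K L (M.e i))
    (ψ := (((i : K) - 1) • M.coordX + M.coordY).smulRight (M.e i)
      + (M.coordE 1).smulRight (M.e (i + 1)))
    (by simp [hi]) (by simp [hi]) (by simp [hi]) (fun m hm => by simp (disch := omega)) v

lemma eq_sum_of_coordE_eq_zero {v : L} {s : Finset ℕ} (hs : ∀ k ∈ s, 1 ≤ k)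
    (hv : ∀ k, 1 ≤ k → k ∉ s → M.coordE k v = 0) :
    v = M.coordX v • M.x + M.coordY v • M.y + ∑ k ∈ s, M.coordE k v • M.e k := by
  refine M.eq_of_coord_eq ?_ ?_ fun m hm => ?_
  · simpa using sum_eq_zero fun k hk => by rw [M.coordX_e (hs k hk), mul_zero]
  · simpa using sum_eq_zero fun k hk => by rw [M.coordY_e (hs k hk), mul_zero]
  · simp only [map_add, map_smul, map_sum, smul_eq_mul, coordE_x, coordE_y, mul_zero, zero_add]
    rw [sum_eq_single m (fun k hk hkm => by simp [M.coordE_e_of_ne (hs k hk) hkm.symm])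
      (fun hms => by simp [hv m hm hms])]
    simp [hm]

lemma exists_coordE_eq_zero (v : L) : ∃ n, ∀ k, n < k → M.coordE k v = 0 := by
  obtain ⟨n, hn⟩ := ((M.basis.repr v).support.image
    (Sum.elim (fun _ => 0) (Sum.elim (fun _ => 0) Subtype.val))).bddAbove
  refine ⟨n, fun k hk => ?_⟩
  rw [M.coordE_of_one_le (by omega), Module.Basis.coord_apply]
  by_contra hne
  exact hk.not_ge (hn (mem_image_of_mem _ (Finsupp.mem_support_iff.2 hne)))

section Derivation

variable (D : LieDerivation K L L)

lemma lie_y_derivation_e_one : ⁅M.y, D (M.e 1)⁆ = ⁅M.e 1, D M.y⁆ := by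
  simpa using D.lie_apply_sub_smul_of_lie_eq_smul (h := M.y) (a := M.e 1) (c := 0) (by simp)

lemma lie_x_derivation_e_one : ⁅M.x, D (M.e 1)⁆ + D (M.e 1) = ⁅M.e 1, D M.x⁆ := by
  simpa using D.lie_apply_sub_smul_of_lie_eq_smul (h := M.x) (a := M.e 1) (c := -1) (by simp)

lemma lie_y_derivation_e_two : ⁅M.y, D (M.e 2)⁆ + D (M.e 2) = ⁅M.e 2, D M.y⁆ := by
  simpa using D.lie_apply_sub_smul_of_lie_eq_smul (h := M.y) (a := M.e 2) (c := -1) (by simp)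

lemma lie_x_derivation_e_two : ⁅M.x, D (M.e 2)⁆ + D (M.e 2) = ⁅M.e 2, D M.x⁆ := by
  simpa using D.lie_apply_sub_smul_of_lie_eq_smul (h := M.x) (a := M.e 2) (c := -1)
    (by norm_num)

/-- Every `e k` is a bracket, so `D (e k)` lies in the derived algebra. -/
lemma apply_derivation_e_eq_zero {N : Type*} [AddCommGroup N] [Module K N] (φ : L →ₗ[K] N)
    (hφ : ∀ k, 1 ≤ k → φ (M.e k) = 0) {k : ℕ} (hk : 1 ≤ k) : φ (D (M.e k)) = 0 := by
  obtain ⟨a, b, hab⟩ : ∃ a b, ⁅a, b⁆ = M.e k := by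
    obtain rfl | hk := (show k = 1 ∨ 2 ≤ k by omega)
    exacts [⟨_, _, M.lie_e_one_x⟩, ⟨_, _, M.lie_e_y hk⟩]
  rw [← hab, D.apply_lie_eq_add, map_add, M.apply_lie_eq_zero φ hφ, M.apply_lie_eq_zero φ hφ,
    add_zero]

lemma coordX_derivation_e {k : ℕ} (hk : 1 ≤ k) : M.coordX (D (M.e k)) = 0 :=
  M.apply_derivation_e_eq_zero D M.coordX (fun _ => M.coordX_e) hk

lemma coordY_derivation_e {k : ℕ} (hk : 1 ≤ k) : M.coordY (D (M.e k)) = 0 :=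
  M.apply_derivation_e_eq_zero D M.coordY (fun _ => M.coordY_e) hk

lemma derivation_e_one_eq {n : ℕ} (hn : ∀ k, n < k → M.coordE k (D (M.e 1)) = 0) :
    D (M.e 1) =
      M.coordE 1 (D (M.e 1)) • M.e 1 + ∑ k ∈ Icc 3 n, M.coordE k (D (M.e 1)) • M.e k := by
  have h2 : M.coordE 2 (D (M.e 1)) = 0 := by
    simpa [M.coordE_lie_y, M.coordE_two_lie_e_one] using
      congr(M.coordE 2 $(M.lie_y_derivation_e_one D))
  have hs : ∀ k ∈ insert 1 (Icc 3 n), 1 ≤ k := fun k hk => by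
    simp only [mem_insert, mem_Icc] at hk; omega
  have hv : ∀ k, 1 ≤ k → k ∉ insert 1 (Icc 3 n) → M.coordE k (D (M.e 1)) = 0 := by
    intro k hk hks
    simp only [mem_insert, mem_Icc, not_or] at hks
    obtain rfl | hk := (show k = 2 ∨ n < k by omega)
    exacts [h2, hn k hk]
  conv_lhs => rw [M.eq_sum_of_coordE_eq_zero hs hv]
  rw [sum_insert (by simp), M.coordX_derivation_e D le_rfl, M.coordY_derivation_e D le_rfl]
  simp

lemma derivation_e_two_eq [CharZero K] :
    D (M.e 2) = M.coordE 2 (D (M.e 2)) • M.e 2 + M.coordE 3 (D (M.e 2)) • M.e 3 := by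
  have h1 : M.coordE 1 (D (M.e 2)) = 0 := by
    simpa [M.coordE_one_lie_y, M.lie_e_eq] using
      congr(M.coordE 1 $(M.lie_y_derivation_e_two D))
  have h4 : ∀ k, 4 ≤ k → M.coordE k (D (M.e 2)) = 0 := by
    intro k hk
    have h : -((k : K) - 1) * M.coordE k (D (M.e 2)) + M.coordE k (D (M.e 2)) = 0 := by
      simpa (disch := omega) [M.coordE_lie_x, M.lie_e_eq] using
        congr(M.coordE k $(M.lie_x_derivation_e_two D))
    have hk2 : (k : K) - 2 ≠ 0 := sub_ne_zero.2 (by exact_mod_cast (by omega : k ≠ 2))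
    exact (mul_eq_zero.1 (by linear_combination -h : ((k : K) - 2) * _ = 0)).resolve_left hk2
  have hv : ∀ k, 1 ≤ k → k ∉ ({2, 3} : Finset ℕ) → M.coordE k (D (M.e 2)) = 0 := by
    intro k hk hks
    simp only [mem_insert, mem_singleton, not_or] at hks
    obtain rfl | hk := (show k = 1 ∨ 4 ≤ k by omega)
    exacts [h1, h4 k hk]
  conv_lhs => rw [M.eq_sum_of_coordE_eq_zero (by simp) hv]
  simp [M.coordX_derivation_e D (k := 2), M.coordY_derivation_e D (k := 2)]

lemma derivation_e_eq [CharZero K] {i : ℕ} (hi : 2 ≤ i) :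
    D (M.e i) = (((i : K) - 2) * M.coordE 1 (D (M.e 1)) + M.coordE 2 (D (M.e 2))) • M.e i
      + M.coordE 3 (D (M.e 2)) • M.e (i + 1) := by
  induction i, hi using Nat.le_induction with
  | base => simpa using M.derivation_e_two_eq D
  | succ i hi ih =>
    have hD := D.apply_lie_eq_add (M.e i) (M.e 1)
    rw [M.lie_e_e_one i hi] at hD
    rw [hD, ih, M.lie_e_eq hi, M.coordX_derivation_e D le_rfl, M.coordY_derivation_e D le_rfl,
      add_lie, smul_lie, smul_lie, M.lie_e_e_one i hi, M.lie_e_e_one (i + 1) (by omega)]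
    push_cast
    module

lemma derivation_x_eq {n : ℕ} (hn : ∀ k, n < k → M.coordE k (D (M.e 1)) = 0) :
    D M.x = (-M.coordE 3 (D (M.e 2))) • M.e 1
      + ∑ k ∈ Icc 2 (n - 1), (((k : K) - 1) * M.coordE (k + 1) (D (M.e 1))) • M.e k := by
  have hX : M.coordX (D M.x) = 0 := by
    simpa [M.coordE_one_lie_x, M.coordE_one_lie_e_one] using
      congr(M.coordE 1 $(M.lie_x_derivation_e_one D)).symm
  have hY : M.coordY (D M.x) = 0 := by
    have h : -((2 : K) - 1) * M.coordE 2 (D (M.e 2)) + M.coordE 2 (D (M.e 2))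
        = ((2 : K) - 1) * M.coordX (D M.x) + M.coordY (D M.x) := by
      simpa (disch := omega) [M.coordE_lie_x, M.lie_e_eq] using
        congr(M.coordE 2 $(M.lie_x_derivation_e_two D))
    linear_combination -h - hX
  have h1 : M.coordE 1 (D M.x) = -M.coordE 3 (D (M.e 2)) := by
    have h : -((3 : K) - 1) * M.coordE 3 (D (M.e 2)) + M.coordE 3 (D (M.e 2))
        = M.coordE 1 (D M.x) := by
      simpa (disch := omega) [M.coordE_lie_x, M.lie_e_eq] using
        congr(M.coordE 3 $(M.lie_x_derivation_e_two D))
    linear_combination -h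
  have hce : ∀ k, 2 ≤ k →
      M.coordE k (D M.x) = ((k : K) - 1) * M.coordE (k + 1) (D (M.e 1)) := by
    intro k hk
    have h : -(((k + 1 : ℕ) : K) - 1) * M.coordE (k + 1) (D (M.e 1))
        + M.coordE (k + 1) (D (M.e 1)) = -M.coordE k (D M.x) := by
      simpa (disch := omega) [M.coordE_lie_x, M.coordE_succ_lie_e_one hk] using
        congr(M.coordE (k + 1) $(M.lie_x_derivation_e_one D))
    push_cast at h
    linear_combination h
  have hs : ∀ k ∈ insert 1 (Icc 2 (n - 1)), 1 ≤ k := fun k hk => by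
    simp only [mem_insert, mem_Icc] at hk; omega
  have hv : ∀ k, 1 ≤ k → k ∉ insert 1 (Icc 2 (n - 1)) → M.coordE k (D M.x) = 0 := by
    intro k hk hks
    simp only [mem_insert, mem_Icc, not_or] at hks
    rw [hce k (by omega), hn (k + 1) (by omega), mul_zero]
  conv_lhs => rw [M.eq_sum_of_coordE_eq_zero hs hv]
  rw [sum_insert (by simp), hX, hY, h1]
  simpa using sum_congr rfl fun k hk => by rw [hce k (mem_Icc.1 hk).1]

lemma derivation_y_eq {n : ℕ} (hn : ∀ k, n < k → M.coordE k (D (M.e 1)) = 0) :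
    D M.y = ∑ k ∈ Icc 2 (n - 1), M.coordE (k + 1) (D (M.e 1)) • M.e k := by
  have hX : M.coordX (D M.y) = 0 := by
    simpa [M.coordE_one_lie_y, M.coordE_one_lie_e_one] using
      congr(M.coordE 1 $(M.lie_y_derivation_e_one D)).symm
  have hY : M.coordY (D M.y) = 0 := by
    simpa (disch := omega) [M.coordE_lie_y, M.lie_e_eq, hX] using
      congr(M.coordE 2 $(M.lie_y_derivation_e_two D)).symm
  have h1 : M.coordE 1 (D M.y) = 0 := by
    simpa (disch := omega) [M.coordE_lie_y, M.lie_e_eq] using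
      congr(M.coordE 3 $(M.lie_y_derivation_e_two D)).symm
  have hce : ∀ k, 2 ≤ k → M.coordE k (D M.y) = M.coordE (k + 1) (D (M.e 1)) := fun k hk => by
    simpa (disch := omega) [M.coordE_lie_y, M.coordE_succ_lie_e_one hk] using
      congr(M.coordE (k + 1) $(M.lie_y_derivation_e_one D)).symm
  have hv : ∀ k, 1 ≤ k → k ∉ Icc 2 (n - 1) → M.coordE k (D M.y) = 0 := by
    intro k hk hks
    simp only [mem_Icc, not_and_or, not_le] at hks
    obtain rfl | hk := (show k = 1 ∨ 2 ≤ k by omega)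
    exacts [h1, (hce k hk).trans (hn (k + 1) (by omega))]
  conv_lhs => rw [M.eq_sum_of_coordE_eq_zero (fun k hk => (mem_Icc.1 hk).1.trans' one_le_two) hv]
  rw [hX, hY]
  simpa using sum_congr rfl fun k hk => by rw [hce k (mem_Icc.1 hk).1]

end Derivation

end M0TildeBasis

/-- Every derivation of the Lie algebra M̃₀ has the form
d(e₁) = α₁e₁ + Σ_{i=3}^n αᵢeᵢ, d(eᵢ) = ((i−2)α₁+β₂)eᵢ + β₃e_{i+1} (i ≥ 2),
d(x) = −β₃e₁ + Σ_{i=2}^{n−1}(i−1)α_{i+1}eᵢ, d(y) = Σ_{i=2}^{n−1} α_{i+1}eᵢ. -/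
theorem M0Tilde_derivation_form
    (L : Type*) [LieRing L] [LieAlgebra ℂ L] (x y : L) (e : ℕ → L)
    (hind : LinearIndependent ℂ
      (Sum.elim (fun _ : Unit => x)
        (Sum.elim (fun _ : Unit => y) (fun i : {n : ℕ // 1 ≤ n} => e i.1))))
    (hspan : Submodule.span ℂ (Set.range
      (Sum.elim (fun _ : Unit => x)
        (Sum.elim (fun _ : Unit => y) (fun i : {n : ℕ // 1 ≤ n} => e i.1)))) = ⊤)
    (hbr : ∀ i, 2 ≤ i → ⁅e i, e 1⁆ = e (i + 1))
    (hzero : ∀ i j, 1 ≤ i → 1 ≤ j → i ≠ 1 → j ≠ 1 → ⁅e i, e j⁆ = 0)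
    (hx1 : ⁅x, e 1⁆ = -e 1)
    (hxi : ∀ i, 2 ≤ i → ⁅x, e i⁆ = (-(((i : ℂ)) - 1)) • e i)
    (hyi : ∀ i, 2 ≤ i → ⁅y, e i⁆ = -e i)
    (hy1 : ⁅y, e 1⁆ = 0)
    (hxy : ⁅x, y⁆ = 0)
    (d : Module.End ℂ L)
    (hd : ∀ a b : L, d ⁅a, b⁆ = ⁅d a, b⁆ + ⁅a, d b⁆) :
    ∃ (n : ℕ) (α : ℕ → ℂ) (β₂ β₃ : ℂ),
      d (e 1) = α 1 • e 1 + ∑ i ∈ Finset.Icc 3 n, α i • e i ∧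
      (∀ i, 2 ≤ i → d (e i) = (((i : ℂ) - 2) * α 1 + β₂) • e i + β₃ • e (i + 1)) ∧
      d x = (-β₃) • e 1 + ∑ i ∈ Finset.Icc 2 (n - 1), (((i : ℂ) - 1) * α (i + 1)) • e i ∧
      d y = ∑ i ∈ Finset.Icc 2 (n - 1), α (i + 1) • e i := by
  let M : M0TildeBasis ℂ L :=
    { x, y, e
      basis := Module.Basis.mk hind hspan.ge
      basis_inl := Module.Basis.mk_apply _ _ _
      basis_inr_inl := Module.Basis.mk_apply _ _ _
      basis_inr_inr := fun k _ => Module.Basis.mk_apply _ _ _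
      lie_e_e_one := hbr
      lie_e_e := fun i j hi hj => hzero i j (by omega) (by omega) (by omega) (by omega)
      lie_x_e_one := hx1
      lie_x_e := hxi
      lie_y_e_one := hy1
      lie_y_e := hyi
      lie_x_y := hxy }
  let D : LieDerivation ℂ L L :=
    { toLinearMap := d
      leibniz' := fun a b => by rw [hd, ← lie_skew b (d a)]; abel }
  obtain ⟨n, hn⟩ := M.exists_coordE_eq_zero (D (e 1))
  exact ⟨n, fun k => M.coordE k (d (e 1)), M.coordE 2 (d (e 2)), M.coordE 3 (d (e 2)),
    M.derivation_e_one_eq D hn, fun i hi => M.derivation_e_eq D hi, M.derivation_x_eq D hn,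
    M.derivation_y_eq D hn⟩
end

section
/- Every derivation of the Lie algebra M̃₂ is inner. In particular, M̃₂ is complete (trivial center and all derivations inner). -/
/-!
`ad x` is diagonal in the basis `x, e₁, e₂, …` with the distinct eigenvalues `0, -1, -2, …`.
Since `ad x` is invertible on `span {eᵢ}`, subtracting a suitable inner derivation from a derivation
`D` makes `D x` a multiple `α x`; comparing `e₁`-coordinates in `D ⁅x, e₁⁆` forces `α = 0`. Then `D` commutes with `ad x`, so
it preserves its one-dimensional eigenspaces: `D eᵢ = λᵢ eᵢ`. The brackets `⁅e₁, eᵢ⁆ = eᵢ₊₁` and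
`⁅e₂, e₃⁆ = e₅` give `λᵢ₊₁ = λ₁ + λᵢ` and `λ₅ = λ₂ + λ₃`, whence `λᵢ = i λ₁` and `D = ad (-λ₁ x)`.
A central element is killed by `ad x`, hence a multiple of `x`, and `⁅e₁, x⁆ = e₁` makes it `0`.
-/

namespace Module.Basis

variable {ι K V : Type*} [Field K] [AddCommGroup V] [Module K V] (B : Basis ι K V)
  {f : Module.End K V} {w : ι → K}

theorem repr_apply_of_forall_apply_eq_smul (hf : ∀ i, f (B i) = w i • B i) (v : V) (j : ι) :
    B.repr (f v) j = w j * B.repr v j := by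
  have : (B.coord j).comp f = w j • B.coord j := B.ext fun i => by
    rcases eq_or_ne i j with rfl | hij
    · simp [hf]
    · simp [hf, Finsupp.single_eq_of_ne' hij]
  exact LinearMap.congr_fun this v

theorem eq_repr_smul_of_apply_eq_smul (hf : ∀ i, f (B i) = w i • B i)
    (hw : Function.Injective w) {v : V} {j : ι} (hv : f v = w j • v) :
    v = B.repr v j • B j := by
  refine B.repr.injective (Finsupp.ext fun k => ?_)
  rcases eq_or_ne k j with rfl | hkj
  · simp
  · have h : w k * B.repr v k = w j * B.repr v k := by
      rw [← B.repr_apply_of_forall_apply_eq_smul hf, hv, map_smul, Finsupp.smul_apply, smul_eq_mul]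
    simpa [Finsupp.single_eq_of_ne hkj, hw.ne hkj] using h

theorem sub_repr_smul_mem_range (hf : ∀ i, f (B i) = w i • B i) (hw : Function.Injective w)
    {j₀ : ι} (hj₀ : w j₀ = 0) (v : V) : v - B.repr v j₀ • B j₀ ∈ LinearMap.range f := by
  refine ⟨B.constr K (fun j => (w j)⁻¹ • B j) v, ?_⟩
  have : f ∘ₗ B.constr K (fun j => (w j)⁻¹ • B j) = LinearMap.id - (B.coord j₀).smulRight (B j₀) :=
    B.ext fun j => by
      rcases eq_or_ne j j₀ with rfl | hj
      · simp [hj₀]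
      · have : w j ≠ 0 := hj₀ ▸ hw.ne hj
        simp [hf, smul_smul, Finsupp.single_eq_of_ne' hj, this]
  exact LinearMap.congr_fun this v

end Module.Basis

theorem LieDerivation.apply_lie_eq_add_smul_lie {R L : Type*} [CommRing R] [LieRing L] [LieAlgebra R L]
    (D : LieDerivation R L L) {a b : L} {μ ν : R} (ha : D a = μ • a) (hb : D b = ν • b) :
    D ⁅a, b⁆ = (μ + ν) • ⁅a, b⁆ := by
  rw [D.apply_lie_eq_add, ha, hb, lie_smul, smul_lie, add_smul, add_comm]

theorem eq_natCast_mul_of_add_recurrence {R : Type*} [CommRing R] {l : ℕ → R}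
    (hsucc : ∀ i, 2 ≤ i → l (i + 1) = l 1 + l i) (h5 : l 5 = l 2 + l 3) {i : ℕ} (hi : 1 ≤ i) :
    l i = i * l 1 := by
  have h2 : l 2 = 2 * l 1 := by
    linear_combination hsucc 4 (by norm_num) + hsucc 3 (by norm_num) - h5
  induction i, hi using Nat.le_induction with
  | base => simp
  | succ n hn ih =>
    rcases hn.eq_or_lt with rfl | hn
    · rw [h2]; norm_num
    · rw [hsucc n hn, ih]; push_cast; ring

namespace M2Tilde

open LieDerivation (ad)

variable {L : Type*} [LieRing L] [LieAlgebra ℂ L] {x : L} {e : ℕ → L}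
  {B : Module.Basis (Unit ⊕ {n : ℕ // 1 ≤ n}) ℂ L}

def weight : Unit ⊕ {n : ℕ // 1 ≤ n} → ℂ :=
  Sum.elim (fun _ => 0) (fun i => -(i.1 : ℂ))

theorem weight_injective : Function.Injective weight := by
  rintro (⟨⟩ | ⟨i, hi⟩) (⟨⟩ | ⟨j, hj⟩) h <;> simp [weight] at h ⊢ <;> omega

theorem lie_x_e (hx1 : ⁅x, e 1⁆ = -e 1) (hxi : ∀ i, 2 ≤ i → ⁅x, e i⁆ = (-(i : ℂ)) • e i)
    (i : ℕ) (hi : 1 ≤ i) : ⁅x, e i⁆ = (-(i : ℂ)) • e i := by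
  rcases hi.eq_or_lt with rfl | hi
  · simpa using hx1
  · exact hxi i hi

theorem ad_x_basis (hB : ⇑B = Sum.elim (fun _ => x) (fun i => e i.1))
    (hx : ∀ i, 1 ≤ i → ⁅x, e i⁆ = (-(i : ℂ)) • e i) (j : Unit ⊕ {n : ℕ // 1 ≤ n}) :
    LieAlgebra.ad ℂ L x (B j) = weight j • B j := by
  rcases j with ⟨⟩ | ⟨i, hi⟩
  · simp [hB, weight]
  · simp [hB, weight, hx _ hi]

theorem eq_zero_of_apply_x_eq_smul (hB : ⇑B = Sum.elim (fun _ => x) (fun i => e i.1))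
    (hx : ∀ i, 1 ≤ i → ⁅x, e i⁆ = (-(i : ℂ)) • e i) (D : LieDerivation ℂ L L) {α : ℂ}
    (hD : D x = α • x) : α = 0 := by
  set j : Unit ⊕ {n : ℕ // 1 ≤ n} := .inr ⟨1, le_rfl⟩
  have hw : weight j = -1 := by simp only [j, weight, Sum.elim_inr, Nat.cast_one]
  have hxb : ⁅x, B j⁆ = -B j := by
    simpa only [hB, j, Sum.elim_inr, Nat.cast_one, neg_smul, one_smul] using hx 1 le_rfl
  have hcoord : B.repr ⁅x, D (B j)⁆ j = -B.repr (D (B j)) j := by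
    rw [← LieAlgebra.ad_apply (R := ℂ), B.repr_apply_of_forall_apply_eq_smul (ad_x_basis hB hx),
      hw, neg_one_mul]
  have h := congr_arg (B.repr · j) (D.apply_lie_eq_add x (B j))
  simp only [hD, smul_lie, hxb, map_neg, map_smul, map_add, Finsupp.add_apply, Finsupp.neg_apply,
    Finsupp.smul_apply, hcoord, B.repr_self, Finsupp.single_eq_same] at h
  linear_combination h

theorem exists_forall_apply_e_eq_smul (hB : ⇑B = Sum.elim (fun _ => x) (fun i => e i.1))
    (hx : ∀ i, 1 ≤ i → ⁅x, e i⁆ = (-(i : ℂ)) • e i) (D : LieDerivation ℂ L L)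
    (hD : D x = 0) : ∃ l : ℕ → ℂ, ∀ i, 1 ≤ i → D (e i) = l i • e i := by
  have h : ∀ i, 1 ≤ i → ∃ l : ℂ, D (e i) = l • e i := fun i hi => by
    have hv : LieAlgebra.ad ℂ L x (D (e i)) = weight (.inr ⟨i, hi⟩) • D (e i) := by
      simpa [hx _ hi, hD, weight] using (D.apply_lie_eq_add x (e i)).symm
    have := B.eq_repr_smul_of_apply_eq_smul (ad_x_basis hB hx) weight_injective hv
    simp only [hB, Sum.elim_inr] at this
    exact ⟨_, this⟩
  choose! l hl using h
  exact ⟨l, hl⟩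

theorem eq_ad_of_forall_apply_e_eq_smul (hB : ⇑B = Sum.elim (fun _ => x) (fun i => e i.1))
    (hx : ∀ i, 1 ≤ i → ⁅x, e i⁆ = (-(i : ℂ)) • e i)
    (hbr1 : ∀ i, 2 ≤ i → ⁅e 1, e i⁆ = e (i + 1)) (hbr2 : ∀ j, 3 ≤ j → ⁅e 2, e j⁆ = e (j + 2))
    (he : ∀ i, 1 ≤ i → e i ≠ 0) (D : LieDerivation ℂ L L) (hD : D x = 0) {l : ℕ → ℂ}
    (hl : ∀ i, 1 ≤ i → D (e i) = l i • e i) : D = ad ℂ L (-l 1 • x) := by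
  have hsum : ∀ {i j k}, 1 ≤ i → 1 ≤ j → 1 ≤ k → ⁅e i, e j⁆ = e k → l k = l i + l j := by
    intro i j k hi hj hk h
    have := D.apply_lie_eq_add_smul_lie (hl i hi) (hl j hj)
    rw [h, hl k hk] at this
    exact smul_left_injective ℂ (he k hk) this
  have hlin : ∀ i, 1 ≤ i → l i = i * l 1 := fun i =>
    eq_natCast_mul_of_add_recurrence
      (fun i hi => hsum le_rfl (by omega) (by omega) (hbr1 i hi))
      (hsum (by omega) (by omega) (by omega) (hbr2 3 le_rfl))
  suffices (D : L →ₗ[ℂ] L) = ad ℂ L (-l 1 • x) from LieDerivation.ext (LinearMap.congr_fun this)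
  refine B.ext fun j => ?_
  rcases j with ⟨⟩ | ⟨i, hi⟩
  · simp [hB, hD]
  · simp [hB, hl i hi, hx i hi, hlin i hi, smul_smul, mul_comm]

theorem exists_eq_ad (hB : ⇑B = Sum.elim (fun _ => x) (fun i => e i.1))
    (hx : ∀ i, 1 ≤ i → ⁅x, e i⁆ = (-(i : ℂ)) • e i)
    (hbr1 : ∀ i, 2 ≤ i → ⁅e 1, e i⁆ = e (i + 1)) (hbr2 : ∀ j, 3 ≤ j → ⁅e 2, e j⁆ = e (j + 2))
    (he : ∀ i, 1 ≤ i → e i ≠ 0) (D : LieDerivation ℂ L L) : ∃ c, ad ℂ L c = D := by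
  obtain ⟨u, hu⟩ := B.sub_repr_smul_mem_range (ad_x_basis hB hx) weight_injective
    (j₀ := .inl ()) rfl (D x)
  set D' := D - ad ℂ L (-u)
  have hD' : D' x = B.repr (D x) (.inl ()) • x := by
    simp only [hB, Sum.elim_inl, LieAlgebra.ad_apply] at hu
    rw [LieDerivation.sub_apply, LieDerivation.ad_apply_apply, neg_lie, lie_skew, hu,
      sub_sub_cancel]
  have hD'x : D' x = 0 := by rw [hD', eq_zero_of_apply_x_eq_smul hB hx D' hD', zero_smul]
  obtain ⟨l, hl⟩ := exists_forall_apply_e_eq_smul hB hx D' hD'x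
  refine ⟨-u + -l 1 • x, ?_⟩
  rw [map_add, ← eq_ad_of_forall_apply_e_eq_smul hB hx hbr1 hbr2 he D' hD'x hl, add_sub_cancel]

theorem center_eq_bot (hB : ⇑B = Sum.elim (fun _ => x) (fun i => e i.1))
    (hx : ∀ i, 1 ≤ i → ⁅x, e i⁆ = (-(i : ℂ)) • e i) (he1 : e 1 ≠ 0) :
    LieAlgebra.center ℂ L = ⊥ := by
  refine (LieSubmodule.eq_bot_iff _).mpr fun a ha => ?_
  have hab : ∀ b : L, ⁅b, a⁆ = 0 := (LieModule.mem_maxTrivSubmodule ℂ L L a).mp ha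
  have hxa : LieAlgebra.ad ℂ L x a = weight (.inl ()) • a := by simp [weight, hab]
  have ha := B.eq_repr_smul_of_apply_eq_smul (ad_x_basis hB hx) weight_injective hxa
  simp only [hB, Sum.elim_inl] at ha
  have h1 : B.repr a (.inl ()) • e 1 = 0 := by
    have h := hab (e 1)
    rw [ha, lie_smul, ← lie_skew, hx 1 le_rfl] at h
    simpa using h
  rw [ha, (smul_eq_zero.mp h1).resolve_right he1, zero_smul]

end M2Tilde

theorem M2Tilde_complete_general
    (L : Type*) [LieRing L] [LieAlgebra ℂ L] (x : L) (e : ℕ → L)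
    (hind : LinearIndependent ℂ
      (Sum.elim (fun _ : Unit => x) (fun i : {n : ℕ // 1 ≤ n} => e i.1)))
    (hspan : Submodule.span ℂ (Set.range
      (Sum.elim (fun _ : Unit => x) (fun i : {n : ℕ // 1 ≤ n} => e i.1))) = ⊤)
    (hbr1 : ∀ i, 2 ≤ i → ⁅e 1, e i⁆ = e (i + 1))
    (hbr2 : ∀ j, 3 ≤ j → ⁅e 2, e j⁆ = e (j + 2))
    (hx1 : ⁅x, e 1⁆ = -e 1)
    (hxi : ∀ i, 2 ≤ i → ⁅x, e i⁆ = (-(i : ℂ)) • e i) :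
    (∀ d : Module.End ℂ L, (∀ a b : L, d ⁅a, b⁆ = ⁅d a, b⁆ + ⁅a, d b⁆) →
      ∃ c : L, ∀ b : L, d b = ⁅c, b⁆) ∧
    LieAlgebra.center ℂ L = ⊥ := by
  let B := Module.Basis.mk hind hspan.ge
  have hB : ⇑B = Sum.elim (fun _ => x) (fun i => e i.1) := Module.Basis.coe_mk _ _
  have hx := M2Tilde.lie_x_e hx1 hxi
  have he : ∀ i, 1 ≤ i → e i ≠ 0 := fun i hi => by
    simpa using hind.ne_zero (.inr ⟨i, hi⟩)
  refine ⟨fun d hd => ?_, M2Tilde.center_eq_bot hB hx (he 1 le_rfl)⟩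
  let D : LieDerivation ℂ L L := ⟨d, fun a b => by rw [hd, ← lie_skew b]; abel⟩
  obtain ⟨c, hc⟩ := M2Tilde.exists_eq_ad hB hx hbr1 hbr2 he D
  exact ⟨c, fun b => by simpa [D] using (LieDerivation.congr_fun hc b).symm⟩

/-- Every derivation of the Lie algebra M̃₂ is inner; in particular M̃₂ is
complete (trivial center and all derivations inner). -/
theorem M2Tilde_complete
    (L : Type*) [LieRing L] [LieAlgebra ℂ L] (x : L) (e : ℕ → L)
    (hind : LinearIndependent ℂ
      (Sum.elim (fun _ : Unit => x) (fun i : {n : ℕ // 1 ≤ n} => e i.1)))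
    (hspan : Submodule.span ℂ (Set.range
      (Sum.elim (fun _ : Unit => x) (fun i : {n : ℕ // 1 ≤ n} => e i.1))) = ⊤)
    (hbr1 : ∀ i, 2 ≤ i → ⁅e 1, e i⁆ = e (i + 1))
    (hbr2 : ∀ j, 3 ≤ j → ⁅e 2, e j⁆ = e (j + 2))
    (hzero : ∀ i j, 3 ≤ i → 3 ≤ j → ⁅e i, e j⁆ = 0)
    (hx1 : ⁅x, e 1⁆ = -e 1)
    (hxi : ∀ i, 2 ≤ i → ⁅x, e i⁆ = (-(i : ℂ)) • e i) :
    (∀ d : Module.End ℂ L, (∀ a b : L, d ⁅a, b⁆ = ⁅d a, b⁆ + ⁅a, d b⁆) →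
      ∃ c : L, ∀ b : L, d b = ⁅c, b⁆) ∧
    LieAlgebra.center ℂ L = ⊥ :=
  M2Tilde_complete_general L x e hind hspan hbr1 hbr2 hx1 hxi
end

section
/- The 2-cocycle φ on M̃₂ defined by φ(e₃, e_j) = e_{j+3} and φ(e₂, e_j) = (4−j) e_{j+2} for j ≥ 5 (zero on other basis pairs) is not a coboundary: there is no linear map f : M̃₂ → M̃₂ with φ(a, b) = [f(a), b] + [a, f(b)] − f([a, b]) for all a, b ∈ M̃₂. Consequently H²(M̃₂, M̃₂) ≠ 0. -/
/-!
Evaluate a putative coboundary at `(e₃, e₅)`. Since `[e₃, e₅] = 0`, it equals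
`[f e₃, e₅] + [e₃, f e₅]`, and for `k ≥ 3` the map `ad e_k` sends the basis into
`span {e_k, e_{k+1}, e_{k+2}}`. So the value lies in `span {e₃, …, e₇}`, which does not
contain `φ(e₃, e₅) = e₈`.
-/

open Set Submodule

theorem LinearMap.apply_mem_of_span_range_eq_top {R M N ι : Type*} [Semiring R]
    [AddCommMonoid M] [AddCommMonoid N] [Module R M] [Module R N] {v : ι → M}
    (hv : span R (Set.range v) = ⊤) (g : M →ₗ[R] N) {T : Submodule R N}
    (h : ∀ i, g (v i) ∈ T) (w : M) : g w ∈ T :=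
  have hle : span R (Set.range v) ≤ T.comap g := span_le.mpr (range_subset_iff.mpr h)
  hle (hv ▸ mem_top)

theorem lie_e_mem_span_e_Icc {L : Type*} [LieRing L] [LieAlgebra ℂ L] {x : L} {e : ℕ → L}
    (hspan : span ℂ (range
      (Sum.elim (fun _ : Unit => x) (fun i : {n : ℕ // 1 ≤ n} => e i.1))) = ⊤)
    (hbr1 : ∀ i, 2 ≤ i → ⁅e 1, e i⁆ = e (i + 1))
    (hbr2 : ∀ j, 3 ≤ j → ⁅e 2, e j⁆ = e (j + 2))
    (hzero : ∀ i j, 3 ≤ i → 3 ≤ j → ⁅e i, e j⁆ = 0)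
    (hxi : ∀ i, 2 ≤ i → ⁅x, e i⁆ = (-(i : ℂ)) • e i)
    {k : ℕ} (hk : 3 ≤ k) (w : L) : ⁅e k, w⁆ ∈ span ℂ (e '' Icc k (k + 2)) := by
  have hmem : ∀ j ∈ Icc k (k + 2), e j ∈ span ℂ (e '' Icc k (k + 2)) :=
    fun j hj => subset_span (mem_image_of_mem e hj)
  refine (LieModule.toEnd ℂ L L (e k)).apply_mem_of_span_range_eq_top hspan ?_ w
  rintro (_ | ⟨j, hj⟩)
  · show ⁅e k, x⁆ ∈ _
    rw [← lie_skew, hxi k (by omega), neg_smul, neg_neg]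
    exact smul_mem _ _ (hmem k (by simp))
  · show ⁅e k, e j⁆ ∈ _
    rcases Nat.lt_or_ge j 3 with hj3 | hj3
    · interval_cases j
      · rw [← lie_skew, hbr1 k (by omega)]
        exact neg_mem (hmem (k + 1) (by simp))
      · rw [← lie_skew, hbr2 k hk]
        exact neg_mem (hmem (k + 2) (by simp))
    · rw [hzero k j hk hj3]
      exact zero_mem _

theorem M2Tilde_phi_not_coboundary_general
    (L : Type*) [LieRing L] [LieAlgebra ℂ L] (x : L) (e : ℕ → L)
    (hind : LinearIndependent ℂ
      (Sum.elim (fun _ : Unit => x) (fun i : {n : ℕ // 1 ≤ n} => e i.1)))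
    (hspan : Submodule.span ℂ (Set.range
      (Sum.elim (fun _ : Unit => x) (fun i : {n : ℕ // 1 ≤ n} => e i.1))) = ⊤)
    (hbr1 : ∀ i, 2 ≤ i → ⁅e 1, e i⁆ = e (i + 1))
    (hbr2 : ∀ j, 3 ≤ j → ⁅e 2, e j⁆ = e (j + 2))
    (hzero : ∀ i j, 3 ≤ i → 3 ≤ j → ⁅e i, e j⁆ = 0)
    (hxi : ∀ i, 2 ≤ i → ⁅x, e i⁆ = (-(i : ℂ)) • e i)
    (φ : L →ₗ[ℂ] L →ₗ[ℂ] L)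
    (h3j : ∀ j, 5 ≤ j → φ (e 3) (e j) = e (j + 3)) :
    ¬ ∃ f : L →ₗ[ℂ] L, ∀ a b : L, φ a b = ⁅f a, b⁆ + ⁅a, f b⁆ - f ⁅a, b⁆ := by
  rintro ⟨f, hf⟩
  have he8 : e 8 = ⁅f (e 3), e 5⁆ + ⁅e 3, f (e 5)⁆ := by
    simpa [h3j 5 le_rfl, hzero 3 5 le_rfl (by norm_num)] using hf (e 3) (e 5)
  have hlie {k : ℕ} (hk : 3 ≤ k) (w : L) := lie_e_mem_span_e_Icc hspan hbr1 hbr2 hzero hxi hk w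
  have hmono : ∀ k, 3 ≤ k → k + 2 ≤ 7 →
      span ℂ (e '' Icc k (k + 2)) ≤ span ℂ (e '' Icc 3 7) :=
    fun k hk3 hk7 => span_mono (image_mono (Icc_subset_Icc hk3 hk7))
  have hT : e 8 ∈ span ℂ (e '' Icc 3 7) := by
    rw [he8, ← lie_skew]
    exact add_mem (neg_mem (hmono 5 (by norm_num) le_rfl (hlie (by norm_num) _)))
      (hmono 3 le_rfl (by norm_num) (hlie le_rfl _))
  have hindOn : LinearIndepOn ℂ e {n | 1 ≤ n} := hind.comp Sum.inr Sum.inr_injective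
  have hsub : insert 8 (Icc 3 7) ⊆ {n | 1 ≤ n} := by
    rintro n (rfl | ⟨hn, -⟩) <;> show 1 ≤ _ <;> omega
  exact (hindOn.mono hsub).notMem_span_of_insert (by simp) hT

/-- The 2-cocycle φ on M̃₂ given by φ(e₃,e_j) = e_{j+3} and
φ(e₂,e_j) = (4−j)e_{j+2} for j ≥ 5 (zero on all other pairs of basis elements) is a
not a coboundary; hence H²(M̃₂, M̃₂) ≠ 0. -/
theorem M2Tilde_phi_not_coboundary
    (L : Type*) [LieRing L] [LieAlgebra ℂ L] (x : L) (e : ℕ → L)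
    (hind : LinearIndependent ℂ
      (Sum.elim (fun _ : Unit => x) (fun i : {n : ℕ // 1 ≤ n} => e i.1)))
    (hspan : Submodule.span ℂ (Set.range
      (Sum.elim (fun _ : Unit => x) (fun i : {n : ℕ // 1 ≤ n} => e i.1))) = ⊤)
    (hbr1 : ∀ i, 2 ≤ i → ⁅e 1, e i⁆ = e (i + 1))
    (hbr2 : ∀ j, 3 ≤ j → ⁅e 2, e j⁆ = e (j + 2))
    (hzero : ∀ i j, 3 ≤ i → 3 ≤ j → ⁅e i, e j⁆ = 0)
    (hx1 : ⁅x, e 1⁆ = -e 1)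
    (hxi : ∀ i, 2 ≤ i → ⁅x, e i⁆ = (-(i : ℂ)) • e i)
    (φ : L →ₗ[ℂ] L →ₗ[ℂ] L)
    (halt : ∀ a : L, φ a a = 0)
    (h3j : ∀ j, 5 ≤ j → φ (e 3) (e j) = e (j + 3))
    (h2j : ∀ j, 5 ≤ j → φ (e 2) (e j) = ((4 : ℂ) - (j : ℂ)) • e (j + 2))
    (hxe : ∀ i, 1 ≤ i → φ x (e i) = 0)
    (hrest : ∀ i j, 1 ≤ i → 1 ≤ j → ¬(i = 3 ∧ 5 ≤ j) → ¬(j = 3 ∧ 5 ≤ i) →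
      ¬(i = 2 ∧ 5 ≤ j) → ¬(j = 2 ∧ 5 ≤ i) → φ (e i) (e j) = 0) :
    ¬ ∃ f : L →ₗ[ℂ] L, ∀ a b : L, φ a b = ⁅f a, b⁆ + ⁅a, f b⁆ - f ⁅a, b⁆ :=
  M2Tilde_phi_not_coboundary_general L x e hind hspan hbr1 hbr2 hzero hxi φ h3j
end

section
/- In the Lie algebra M̃₀, the map ad_x restricted to the ideal spanned by {e₁, e₂, …} is not potentially nilpotent: ⋂_{k≥1} Im(ad_x^k) ≠ 0 (in fact every eᵢ lies in the image of all powers of ad_x). -/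
/-!
Each `eᵢ` is an eigenvector of `ad x` with the nonzero eigenvalue `-1` (for `i = 1`) or
`-(i - 1)` (for `i ≥ 2`), so `ad x` is invertible on the line `ℂ eᵢ` and `eᵢ` lies in the image
of every power of `ad x`.
-/

namespace Module.End

variable {K V : Type*} [Field K] [AddCommGroup V] [Module K V] {f : End K V} {μ : K} {v : V}

theorem HasEigenvector.pow_apply_inv_pow_smul (hv : f.HasEigenvector μ v) (hμ : μ ≠ 0) (k : ℕ) :
    (f ^ k) (μ⁻¹ ^ k • v) = v := by
  rw [map_smul, hv.pow_apply, smul_smul, ← mul_pow, inv_mul_cancel₀ hμ, one_pow, one_smul]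

theorem HasEigenvector.mem_iInf_range_pow (hv : f.HasEigenvector μ v) (hμ : μ ≠ 0) :
    v ∈ ⨅ k : ℕ, LinearMap.range (f ^ (k + 1)) :=
  Submodule.mem_iInf _ |>.mpr fun k => ⟨_, hv.pow_apply_inv_pow_smul hμ (k + 1)⟩

theorem HasEigenvector.iInf_range_pow_ne_bot (hv : f.HasEigenvector μ v) (hμ : μ ≠ 0) :
    ⨅ k : ℕ, LinearMap.range (f ^ (k + 1)) ≠ ⊥ := fun h =>
  hv.2 <| (Submodule.mem_bot K).mp (h ▸ hv.mem_iInf_range_pow hμ)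

end Module.End

theorem exists_ne_zero_hasEigenvector_ad {L : Type*} [LieRing L] [LieAlgebra ℂ L] {x : L}
    {e : ℕ → L} (he : ∀ i, 1 ≤ i → e i ≠ 0) (hx1 : ⁅x, e 1⁆ = -e 1)
    (hxi : ∀ i, 2 ≤ i → ⁅x, e i⁆ = (-(((i : ℂ)) - 1)) • e i) {i : ℕ} (hi : 1 ≤ i) :
    ∃ μ : ℂ, μ ≠ 0 ∧ (LieAlgebra.ad ℂ L x).HasEigenvector μ (e i) := by
  rcases hi.eq_or_lt with rfl | hi2
  · exact ⟨-1, by norm_num, Module.End.hasEigenvector_iff.mpr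
      ⟨Module.End.mem_eigenspace_iff.mpr (by simp [hx1]), he 1 le_rfl⟩⟩
  · have hi1 : (i : ℂ) ≠ 1 := by exact_mod_cast hi2.ne'
    exact ⟨-((i : ℂ) - 1), neg_ne_zero.mpr (sub_ne_zero.mpr hi1),
      Module.End.hasEigenvector_iff.mpr
        ⟨Module.End.mem_eigenspace_iff.mpr (hxi i hi2), he i hi⟩⟩

theorem M0Tilde_ad_x_not_potentially_nilpotent_general
    (L : Type*) [LieRing L] [LieAlgebra ℂ L] (x y : L) (e : ℕ → L)
    (hind : LinearIndependent ℂ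
      (Sum.elim (fun _ : Unit => x)
        (Sum.elim (fun _ : Unit => y) (fun i : {n : ℕ // 1 ≤ n} => e i.1))))
    (hx1 : ⁅x, e 1⁆ = -e 1)
    (hxi : ∀ i, 2 ≤ i → ⁅x, e i⁆ = (-(((i : ℂ)) - 1)) • e i) :
    (∀ k i : ℕ, 1 ≤ i →
      ∃ v ∈ Submodule.span ℂ (Set.range (fun i : {n : ℕ // 1 ≤ n} => e i.1)),
        ((LieAlgebra.ad ℂ L x) ^ k) v = e i) ∧
    ⨅ k : ℕ, LinearMap.range ((LieAlgebra.ad ℂ L x) ^ (k + 1)) ≠ ⊥ := by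
  have he : ∀ i, 1 ≤ i → e i ≠ 0 := fun i hi =>
    hind.ne_zero (Sum.inr (Sum.inr (⟨i, hi⟩ : {n : ℕ // 1 ≤ n})))
  refine ⟨fun k i hi => ?_, ?_⟩
  · obtain ⟨μ, hμ, hv⟩ := exists_ne_zero_hasEigenvector_ad he hx1 hxi hi
    exact ⟨μ⁻¹ ^ k • e i, Submodule.smul_mem _ _ (Submodule.subset_span ⟨⟨i, hi⟩, rfl⟩),
      hv.pow_apply_inv_pow_smul hμ k⟩
  · obtain ⟨μ, hμ, hv⟩ := exists_ne_zero_hasEigenvector_ad he hx1 hxi le_rfl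
    exact hv.iInf_range_pow_ne_bot hμ

/-- In M̃₀ the operator ad_x restricted to the ideal spanned by the eᵢ is not
potentially nilpotent: every eᵢ lies in the image of every power of ad_x (with a preimage in
the span of the eᵢ), so ⋂_{k≥1} Im(ad_x^k) ≠ 0. -/
theorem M0Tilde_ad_x_not_potentially_nilpotent
    (L : Type*) [LieRing L] [LieAlgebra ℂ L] (x y : L) (e : ℕ → L)
    (hind : LinearIndependent ℂ
      (Sum.elim (fun _ : Unit => x)
        (Sum.elim (fun _ : Unit => y) (fun i : {n : ℕ // 1 ≤ n} => e i.1))))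
    (hspan : Submodule.span ℂ (Set.range
      (Sum.elim (fun _ : Unit => x)
        (Sum.elim (fun _ : Unit => y) (fun i : {n : ℕ // 1 ≤ n} => e i.1)))) = ⊤)
    (hbr : ∀ i, 2 ≤ i → ⁅e i, e 1⁆ = e (i + 1))
    (hzero : ∀ i j, 1 ≤ i → 1 ≤ j → i ≠ 1 → j ≠ 1 → ⁅e i, e j⁆ = 0)
    (hx1 : ⁅x, e 1⁆ = -e 1)
    (hxi : ∀ i, 2 ≤ i → ⁅x, e i⁆ = (-(((i : ℂ)) - 1)) • e i)
    (hyi : ∀ i, 2 ≤ i → ⁅y, e i⁆ = -e i)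
    (hy1 : ⁅y, e 1⁆ = 0)
    (hxy : ⁅x, y⁆ = 0) :
    (∀ k i : ℕ, 1 ≤ i →
      ∃ v ∈ Submodule.span ℂ (Set.range (fun i : {n : ℕ // 1 ≤ n} => e i.1)),
        ((LieAlgebra.ad ℂ L x) ^ k) v = e i) ∧
    ⨅ k : ℕ, LinearMap.range ((LieAlgebra.ad ℂ L x) ^ (k + 1)) ≠ ⊥ :=
  M0Tilde_ad_x_not_potentially_nilpotent_general L x y e hind hx1 hxi
end
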